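/- arXiv:1810.12072 — 7 statements merged into one kernel-verified Lean document; each statement's English description precedes it below -/
import Mathlib

section
/- Let γ > −1 and δ ∈ ℝ. For every z ∈ ℝ, the series ∑_{k=0}^∞ z^k / (k! Γ(γk + δ)) defining the two-parameter Wright function W(z; γ, δ) converges absolutely (the family k ↦ z^k / (k! Γ(γk + δ)) is summable), where 1/Γ(x) is interpreted as the entire reciprocal gamma function (equal to 0 at nonpositive integers). -/
/-!
Write each term as `zᵏ / k! · Γ(γk + δ)⁻¹`. For `γ ≥ 0` the factor `Γ(γk + δ)⁻¹` is eventually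
bounded, so the series is dominated by the exponential series. For `-1 < γ < 0` the argument
`γk + δ` tends to `-∞`, and Euler's reflection formula bounds `|Γ(x)⁻¹|` by `Γ(1 - x) / π`. The
resulting majorant `|z|ᵏ Γ(sk + 1 - δ) / k!` with `s = -γ ∈ (0, 1)` passes the ratio test: by
log-convexity, `Γ(x + s) ≤ Γ(x) xˢ`, so consecutive ratios are `O(k^(s-1)) → 0`.
-/

open Real

/-- The terms of the series defining the two-parameter Wright function
`W(z; γ, δ) = ∑ₖ zᵏ / (k! Γ(γk + δ))`, where `1/Γ` is the entire reciprocal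
gamma function (Mathlib's `Real.Gamma` vanishes at nonpositive integers, so
division by it realizes this convention). -/
noncomputable def wrightTerm (γ δ z : ℝ) (k : ℕ) : ℝ :=
  z ^ k / ((k.factorial : ℝ) * Real.Gamma (γ * k + δ))

open Filter Nat

namespace Real

theorem Gamma_add_le_Gamma_mul_rpow {x s : ℝ} (hx : 0 < x) (hs0 : 0 < s) (hs1 : s < 1) :
    Gamma (x + s) ≤ Gamma x * x ^ s := by
  have hΓ := (Gamma_pos_of_pos hx).le
  calc Gamma (x + s) = Gamma ((1 - s) * x + s * (x + 1)) := by ring_nf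
    _ ≤ Gamma x ^ (1 - s) * Gamma (x + 1) ^ s :=
      Gamma_mul_add_mul_le_rpow_Gamma_mul_rpow_Gamma hx (by linarith) (by linarith) hs0 (by ring)
    _ = Gamma x * x ^ s := by
      rw [Gamma_add_one hx.ne', mul_rpow hx.le hΓ, mul_left_comm,
        ← rpow_add_of_nonneg hΓ (by linarith) hs0.le, sub_add_cancel, rpow_one, mul_comm]

theorem inv_Gamma_mul_inv_Gamma_one_sub (x : ℝ) :
    (Gamma x)⁻¹ * (Gamma (1 - x))⁻¹ = sin (π * x) / π := by
  rw [← mul_inv, Gamma_mul_Gamma_one_sub, inv_div]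

theorem abs_inv_Gamma_le_Gamma_one_sub_div_pi {x : ℝ} (hx : x < 1) :
    |(Gamma x)⁻¹| ≤ Gamma (1 - x) / π := by
  have hΓ : 0 < Gamma (1 - x) := Gamma_pos_of_pos (by linarith)
  have hinv : (Gamma x)⁻¹ = sin (π * x) / π * Gamma (1 - x) := by
    rw [← inv_Gamma_mul_inv_Gamma_one_sub, inv_mul_cancel_right₀ hΓ.ne']
  rw [hinv, abs_mul, abs_div, abs_of_pos pi_pos, abs_of_pos hΓ, div_mul_eq_mul_div,
    div_le_div_iff_of_pos_right pi_pos]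
  exact mul_le_of_le_one_left hΓ.le (abs_sin_le_one _)

end Real

theorem summable_pow_div_factorial_mul_Gamma (r c : ℝ) {s : ℝ} (hs0 : 0 < s) (hs1 : s < 1) :
    Summable fun k : ℕ => r ^ k / k ! * Gamma (s * k + c) := by
  have ht : Tendsto (fun k : ℕ => s * k + c) atTop atTop :=
    tendsto_atTop_add_const_right _ c
      ((tendsto_natCast_atTop_atTop).const_mul_atTop hs0)
  have hsmall : ∀ᶠ k : ℕ in atTop, |r| * (s * k + c) ^ (s - 1) ≤ 1 / 2 := by
    have := ((tendsto_rpow_neg_atTop (y := 1 - s) (by linarith)).const_mul |r|).comp ht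
    rw [mul_zero, neg_sub] at this
    exact this.eventually_le_const (by norm_num)
  have hle : ∀ᶠ k : ℕ in atTop, s * k + c ≤ k + 1 := by
    filter_upwards [((tendsto_natCast_atTop_atTop (R := ℝ)).const_mul_atTop
      (sub_pos.2 hs1)).eventually_ge_atTop (c - 1)] with k hk
    linarith
  refine summable_of_ratio_norm_eventually_le (r := 1 / 2) (by norm_num) ?_
  filter_upwards [ht.eventually_gt_atTop 0, hle, hsmall] with k hpos hle hsmall
  set t := s * k + c
  have hΓ := Gamma_pos_of_pos hpos
  have hratio : |r| * Gamma (t + s) / (k + 1) ≤ 1 / 2 * Gamma t := by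
    rw [div_le_iff₀ (by positivity)]
    calc |r| * Gamma (t + s) ≤ |r| * (Gamma t * t ^ s) := by
          gcongr; exact Gamma_add_le_Gamma_mul_rpow hpos hs0 hs1
      _ = Gamma t * (|r| * t ^ (s - 1) * t) := by
          rw [mul_assoc, ← rpow_add_one hpos.ne', sub_add_cancel]; ring
      _ ≤ Gamma t * (1 / 2 * (k + 1)) := by gcongr
      _ = _ := by ring
  have hstep : s * ((k + 1 : ℕ) : ℝ) + c = t + s := by push_cast; ring
  simp only [norm_div, norm_mul, norm_pow, Real.norm_eq_abs, hstep, Nat.abs_cast,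
    abs_of_pos hΓ, abs_of_pos (Gamma_pos_of_pos (by linarith : 0 < t + s)), factorial_succ]
  push_cast
  calc |r| ^ (k + 1) / ((k + 1) * k !) * Gamma (t + s)
      = |r| ^ k / k ! * (|r| * Gamma (t + s) / (k + 1)) := by field_simp; ring
    _ ≤ |r| ^ k / k ! * (1 / 2 * Gamma t) := by gcongr
    _ = 1 / 2 * (|r| ^ k / k ! * Gamma t) := by ring

theorem norm_wrightTerm (γ δ z : ℝ) (k : ℕ) :
    ‖wrightTerm γ δ z k‖ = |z| ^ k / k ! * |(Gamma (γ * k + δ))⁻¹| := by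
  rw [wrightTerm, Real.norm_eq_abs, div_mul_eq_div_div, div_eq_mul_inv, abs_mul, abs_div,
    abs_pow, Nat.abs_cast]

theorem summable_wrightTerm_of_eventually_le {γ δ z : ℝ} {a : ℕ → ℝ}
    (ha : Summable fun k : ℕ => |z| ^ k / k ! * a k)
    (h : ∀ᶠ k : ℕ in atTop, |(Gamma (γ * k + δ))⁻¹| ≤ a k) :
    Summable (wrightTerm γ δ z) :=
  ha.of_norm_bounded_eventually_nat <| h.mono fun k hk => by
    rw [norm_wrightTerm]; gcongr

theorem summable_wrightTerm_of_neg {γ : ℝ} (hγ : -1 < γ) (hneg : γ < 0) (δ z : ℝ) :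
    Summable (wrightTerm γ δ z) := by
  have hlin : Tendsto (fun k : ℕ => γ * k + δ) atTop atBot :=
    tendsto_atBot_add_const_right _ δ
      ((tendsto_natCast_atTop_atTop).const_mul_atTop_of_neg hneg)
  refine summable_wrightTerm_of_eventually_le (a := fun k => Gamma (-γ * k + (1 - δ)) / π) ?_ ?_
  · simpa only [mul_div_assoc] using
      (summable_pow_div_factorial_mul_Gamma |z| (1 - δ) (neg_pos.2 hneg) (by linarith)).div_const π
  · filter_upwards [hlin.eventually_lt_atBot 1] with k hk
    rw [show -γ * k + (1 - δ) = 1 - (γ * k + δ) by ring]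
    exact abs_inv_Gamma_le_Gamma_one_sub_div_pi hk

theorem summable_wrightTerm_of_pos {γ : ℝ} (hpos : 0 < γ) (δ z : ℝ) :
    Summable (wrightTerm γ δ z) := by
  have hlin : Tendsto (fun k : ℕ => γ * k + δ) atTop atTop :=
    tendsto_atTop_add_const_right _ δ ((tendsto_natCast_atTop_atTop).const_mul_atTop hpos)
  refine summable_wrightTerm_of_eventually_le (a := fun _ => 1)
    (by simpa only [mul_one] using summable_pow_div_factorial |z|) ?_
  filter_upwards [hlin.eventually_ge_atTop 2] with k hk
  have hΓ : 1 ≤ Gamma (γ * k + δ) :=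
    Gamma_two ▸ Gamma_strictMonoOn_Ici.monotoneOn (Set.mem_Ici.2 le_rfl) hk hk
  rw [abs_of_pos (inv_pos.2 (by linarith))]
  exact inv_le_one_of_one_le₀ hΓ

/-- For `γ > −1`, `δ ∈ ℝ`, the series defining the Wright function `W(z; γ, δ)`
converges absolutely for every real `z`. -/
theorem wright_summable (γ δ : ℝ) (hγ : -1 < γ) (z : ℝ) :
    Summable (fun k : ℕ => wrightTerm γ δ z k) := by
  rcases lt_trichotomy γ 0 with hneg | rfl | hpos
  · exact summable_wrightTerm_of_neg hγ hneg δ z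
  · exact summable_wrightTerm_of_eventually_le (a := fun _ => |(Gamma δ)⁻¹|)
      ((summable_pow_div_factorial |z|).mul_right _) (by simp)
  · exact summable_wrightTerm_of_pos hpos δ z
end

section
/- For every real z, the Wright function with parameters γ = −1/2, δ = 1 satisfies W(−z; −1/2, 1) = erfc(z/2), i.e. ∑_{k=0}^∞ (−z)^k / (k! Γ(−k/2 + 1)) = (2/√π) ∫_{z/2}^∞ e^{−t²} dt. -/
open Real MeasureTheory

noncomputable def wright (γ δ z : ℝ) : ℝ :=
  ∑' k : ℕ, z ^ k / ((k.factorial : ℝ) * Real.Gamma (γ * k + δ))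

noncomputable def erfc (z : ℝ) : ℝ :=
  (2 / Real.sqrt π) * ∫ t in Set.Ioi z, Real.exp (-t ^ 2)

noncomputable def gser (x : ℝ) : ℝ :=
  ∑' m : ℕ, (-1) ^ m * x ^ (2 * m + 1) / ((m.factorial : ℝ) * (2 * m + 1))

lemma gser_norm_eq (x : ℝ) (m : ℕ) :
    ‖(-1 : ℝ) ^ m * x ^ (2 * m + 1) / ((m.factorial : ℝ) * (2 * m + 1))‖
      = |x| ^ (2 * m + 1) / ((m.factorial : ℝ) * (2 * m + 1)) := by
  have hpos : (0 : ℝ) < (m.factorial : ℝ) * (2 * m + 1) := by positivity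
  rw [Real.norm_eq_abs, abs_div, abs_mul, abs_pow, abs_neg, abs_one, one_pow, one_mul,
    abs_pow, abs_of_pos hpos]

lemma abs_pow_two_mul (x : ℝ) (m : ℕ) : |x| ^ (2 * m) = (x ^ 2) ^ m := by
  rw [pow_mul, sq_abs]

lemma gser_term_summable (x : ℝ) :
    Summable (fun m : ℕ => (-1) ^ m * x ^ (2 * m + 1) / ((m.factorial : ℝ) * (2 * m + 1))) := by
  apply Summable.of_norm_bounded (g := fun m : ℕ => |x| * ((x ^ 2) ^ m / m.factorial))
  · exact (Real.summable_pow_div_factorial (x ^ 2)).mul_left _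
  · intro m
    rw [gser_norm_eq]
    have e1 : |x| ^ (2 * m + 1) = |x| * (x ^ 2) ^ m := by
      rw [pow_succ', abs_pow_two_mul]
    rw [e1, mul_div_assoc]
    have hfac : (0 : ℝ) < (m.factorial : ℝ) := by exact_mod_cast m.factorial_pos
    gcongr
    nlinarith

lemma gser_hasDerivAt (x : ℝ) : HasDerivAt gser (Real.exp (-x ^ 2)) x := by
  set R : ℝ := |x| + 1 with hR
  have hxR : x ∈ Metric.ball (0 : ℝ) R := by
    simp only [Metric.mem_ball, Real.dist_eq, sub_zero, hR]
    linarith [abs_nonneg x]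
  have key : HasDerivAt (fun y => ∑' m : ℕ,
      (-1) ^ m * y ^ (2 * m + 1) / ((m.factorial : ℝ) * (2 * m + 1)))
      (∑' m : ℕ, (-1) ^ m * x ^ (2 * m) / (m.factorial : ℝ)) x := by
    apply hasDerivAt_tsum_of_isPreconnected
      (u := fun m : ℕ => (R ^ 2) ^ m / (m.factorial : ℝ))
      (g' := fun m y => (-1) ^ m * y ^ (2 * m) / (m.factorial : ℝ))
      (Real.summable_pow_div_factorial (R ^ 2)) Metric.isOpen_ball
      ((convex_ball (0:ℝ) R).isPreconnected) _ _ (Metric.mem_ball_self (by positivity)) _ hxR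
    · intro m y _
      have hfac : ((m.factorial : ℝ)) ≠ 0 := Nat.cast_ne_zero.2 m.factorial_ne_zero
      have hm2 : (2 * (m : ℝ) + 1) ≠ 0 := by positivity
      have h := (hasDerivAt_pow (2 * m + 1) y).const_mul
        ((-1 : ℝ) ^ m / ((m.factorial : ℝ) * (2 * m + 1)))
      have hfun : (fun y : ℝ => (-1 : ℝ) ^ m / ((m.factorial : ℝ) * (2 * m + 1)) * y ^ (2 * m + 1))
          = fun y : ℝ => (-1) ^ m * y ^ (2 * m + 1) / ((m.factorial : ℝ) * (2 * m + 1)) := by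
        funext y; ring
      have hval : ((-1 : ℝ) ^ m / ((m.factorial : ℝ) * (2 * m + 1)))
          * (((2 * m + 1 : ℕ) : ℝ) * y ^ (2 * m + 1 - 1))
          = (-1) ^ m * y ^ (2 * m) / (m.factorial : ℝ) := by
        simp only [Nat.add_sub_cancel]
        push_cast
        field_simp
      rw [hfun, hval] at h
      exact h
    · intro m y hy
      have hyR : |y| ≤ R := by
        rw [Metric.mem_ball, Real.dist_eq, sub_zero] at hy
        linarith
      have hnorm : ‖(-1 : ℝ) ^ m * y ^ (2 * m) / (m.factorial : ℝ)‖
          = |y| ^ (2 * m) / (m.factorial : ℝ) := by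
        have hpos : (0 : ℝ) < (m.factorial : ℝ) := by exact_mod_cast m.factorial_pos
        rw [Real.norm_eq_abs, abs_div, abs_mul, abs_pow, abs_neg, abs_one, one_pow, one_mul,
          abs_pow, abs_of_pos hpos]
      rw [hnorm, abs_pow_two_mul]
      have hfacpos : (0 : ℝ) < (m.factorial : ℝ) := by exact_mod_cast m.factorial_pos
      have hpow : (y ^ 2) ^ m ≤ (R ^ 2) ^ m :=
        pow_le_pow_left₀ (sq_nonneg y) (by nlinarith [abs_nonneg y, sq_abs y]) m
      exact (div_le_div_iff_of_pos_right hfacpos).2 hpow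
    · have hz : (fun m : ℕ => (-1 : ℝ) ^ m * (0 : ℝ) ^ (2 * m + 1)
          / ((m.factorial : ℝ) * (2 * m + 1))) = fun _ => (0 : ℝ) := by
        funext m
        simp
      rw [hz]
      exact summable_zero
  have heq : (∑' m : ℕ, (-1) ^ m * x ^ (2 * m) / (m.factorial : ℝ)) = Real.exp (-x ^ 2) := by
    rw [Real.exp_eq_exp_ℝ, NormedSpace.exp_eq_tsum_div]
    apply tsum_congr
    intro m
    rw [show (-x ^ 2 : ℝ) ^ m = (-1) ^ m * x ^ (2 * m) by
      rw [← neg_one_mul, mul_pow, ← pow_mul]]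
  rw [heq] at key
  exact key

lemma gser_zero : gser 0 = 0 := by
  unfold gser
  convert tsum_zero with m
  simp

lemma intervalIntegral_eq_gser (a : ℝ) :
    ∫ t in (0:ℝ)..a, Real.exp (-t ^ 2) = gser a := by
  have := intervalIntegral.integral_eq_sub_of_hasDerivAt
    (f := gser) (f' := fun t => Real.exp (-t ^ 2)) (a := 0) (b := a)
    (fun t _ => gser_hasDerivAt t)
    (Continuous.intervalIntegrable (by continuity) _ _)
  rw [this, gser_zero, sub_zero]

lemma integral_Ioi_gaussian (a : ℝ) :
    ∫ t in Set.Ioi a, Real.exp (-t ^ 2) = Real.sqrt π / 2 - gser a := by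
  have hint : Integrable (fun t : ℝ => Real.exp (-t ^ 2)) := by
    simpa using integrable_exp_neg_mul_sq one_pos
  have cont : Continuous (fun t : ℝ => Real.exp (-t ^ 2)) := by continuity
  have hG : ∀ x : ℝ, HasDerivAt (fun b => ∫ t in (0:ℝ)..b, Real.exp (-t ^ 2))
      (Real.exp (-x ^ 2)) x := by
    intro x
    exact intervalIntegral.integral_hasDerivAt_right
      (cont.intervalIntegrable _ _) (cont.stronglyMeasurableAtFilter _ _) cont.continuousAt
  have htend : Filter.Tendsto (fun b => ∫ t in (0:ℝ)..b, Real.exp (-t ^ 2))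
      Filter.atTop (nhds (Real.sqrt π / 2)) := by
    have h := intervalIntegral_tendsto_integral_Ioi (0:ℝ) hint.integrableOn Filter.tendsto_id
    have h2 : (∫ t in Set.Ioi (0:ℝ), Real.exp (-t ^ 2)) = Real.sqrt π / 2 := by
      have := integral_gaussian_Ioi 1
      simpa using this
    rwa [h2] at h
  have := integral_Ioi_of_hasDerivAt_of_tendsto
    ((hG a).continuousAt.continuousWithinAt)
    (fun x _ => hG x) hint.integrableOn htend
  rw [this, intervalIntegral_eq_gser]

lemma gamma_half_sub (m : ℕ) :
    Real.Gamma (1 / 2 - m) = (-4 : ℝ) ^ m * m.factorial / ((2 * m).factorial : ℝ) * Real.sqrt π := by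
  induction m with
  | zero =>
    show Real.Gamma (1 / 2 - (0:ℕ)) = _
    norm_num [Real.Gamma_one_half_eq]
  | succ n ih =>
    have hs : (1 / 2 : ℝ) - ((n : ℝ) + 1) ≠ 0 := by
      have : (0:ℝ) ≤ (n : ℝ) := Nat.cast_nonneg n
      intro h; linarith
    have h := Real.Gamma_add_one hs
    have harg : (1 / 2 : ℝ) - ((n : ℝ) + 1) + 1 = 1 / 2 - n := by ring
    rw [harg] at h
    have hcast : ((n + 1 : ℕ) : ℝ) = (n : ℝ) + 1 := by push_cast; ring
    rw [hcast]
    apply mul_left_cancel₀ hs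
    rw [← h, ih]
    have hfac2 : (((2 * (n + 1)).factorial : ℕ) : ℝ)
        = (2 * (n:ℝ) + 2) * ((2 * (n:ℝ) + 1) * (((2 * n).factorial : ℕ) : ℝ)) := by
      rw [show 2 * (n + 1) = (2 * n + 1) + 1 by ring, Nat.factorial_succ, Nat.factorial_succ]
      push_cast; ring
    have hfac1 : (((n + 1).factorial : ℕ) : ℝ) = ((n:ℝ) + 1) * ((n.factorial : ℕ) : ℝ) := by
      rw [Nat.factorial_succ]; push_cast; ring
    rw [hfac2, hfac1]
    have h1 : (((2 * n).factorial : ℕ) : ℝ) ≠ 0 := Nat.cast_ne_zero.2 (Nat.factorial_ne_zero _)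
    have h3 : (2 * (n : ℝ) + 1) ≠ 0 := by positivity
    have h4 : (2 * (n : ℝ) + 2) ≠ 0 := by positivity
    field_simp
    ring

/-- For every real `z`, `W(−z; −1/2, 1) = erfc(z/2)`. -/
theorem wright_neg_half_one_eq_erfc (z : ℝ) :
    wright (-(1/2)) 1 (-z) = erfc (z / 2) := by
  have hpi : Real.sqrt π ≠ 0 := by positivity
  set f : ℕ → ℝ := fun k => (-z) ^ k / ((k.factorial : ℝ) * Real.Gamma (-(1/2) * k + 1)) with hf
  have heven : ∀ m : ℕ, m ≠ 0 → f (2 * m) = 0 := by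
    intro m hm
    obtain ⟨n, rfl⟩ := Nat.exists_eq_succ_of_ne_zero hm
    have harg : -(1/2 : ℝ) * ((2 * (n + 1) : ℕ) : ℝ) + 1 = -(n : ℝ) := by
      push_cast; ring
    rw [hf]
    simp only [harg, Real.Gamma_neg_nat_eq_zero, mul_zero, div_zero]
  have hf0 : f 0 = 1 := by
    rw [hf]
    norm_num [Real.Gamma_one]
  have hevensum : ∑' m : ℕ, f (2 * m) = 1 := by
    rw [tsum_eq_single 0 (fun m hm => heven m hm)]
    simpa using hf0
  have hevensummable : Summable (fun m : ℕ => f (2 * m)) := by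
    apply summable_of_ne_finset_zero (s := {0})
    intro m hm
    exact heven m (by simpa using hm)
  have hodd : ∀ m : ℕ, f (2 * m + 1) = -(2 / Real.sqrt π) *
      ((-1) ^ m * (z / 2) ^ (2 * m + 1) / ((m.factorial : ℝ) * (2 * m + 1))) := by
    intro m
    have harg : -(1/2 : ℝ) * ((2 * m + 1 : ℕ) : ℝ) + 1 = 1 / 2 - m := by
      push_cast; ring
    rw [hf]
    simp only [harg, gamma_half_sub]
    have h1 : ((2 * m).factorial : ℝ) ≠ 0 := Nat.cast_ne_zero.2 (Nat.factorial_ne_zero _)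
    have h2 : ((m.factorial : ℝ)) ≠ 0 := Nat.cast_ne_zero.2 (Nat.factorial_ne_zero _)
    have h3 : (2 * (m : ℝ) + 1) ≠ 0 := by positivity
    have hfac : (((2 * m + 1).factorial : ℕ) : ℝ) = (2 * (m:ℝ) + 1) * ((2 * m).factorial : ℝ) := by
      rw [Nat.factorial_succ]; push_cast; ring
    have hneg : (-z : ℝ) ^ (2 * m + 1) = -(z ^ (2 * m + 1)) := by
      rw [neg_pow, pow_succ, pow_mul]
      norm_num
    have hz2 : (z / 2) ^ (2 * m + 1) = z ^ (2 * m + 1) / 2 ^ (2 * m + 1) := div_pow z 2 _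
    have h4 : ((-4 : ℝ)) ^ m = (-1) ^ m * 4 ^ m := by
      rw [← neg_one_mul, mul_pow]
    have h5 : (2 : ℝ) ^ (2 * m + 1) = 2 * 4 ^ m := by
      rw [pow_succ, pow_mul]
      norm_num [mul_comm]
    rw [hfac, hneg, hz2, h4, h5]
    field_simp
    ring_nf
    norm_num [pow_mul']
  have hoddsummable : Summable (fun m : ℕ => f (2 * m + 1)) := by
    have h := (gser_term_summable (z / 2)).mul_left (-(2 / Real.sqrt π))
    apply h.congr
    intro m
    rw [hodd m]
  have hoddsum : ∑' m : ℕ, f (2 * m + 1) = -(2 / Real.sqrt π) * gser (z / 2) := by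
    calc ∑' m : ℕ, f (2 * m + 1)
        = ∑' m : ℕ, -(2 / Real.sqrt π) *
          ((-1) ^ m * (z / 2) ^ (2 * m + 1) / ((m.factorial : ℝ) * (2 * m + 1))) :=
          tsum_congr hodd
      _ = -(2 / Real.sqrt π) * gser (z / 2) := tsum_mul_left
  have hsplit := tsum_even_add_odd hevensummable hoddsummable
  have hwright : wright (-(1/2)) 1 (-z) = 1 + -(2 / Real.sqrt π) * gser (z / 2) := by
    rw [wright, ← hsplit, hevensum, hoddsum]
  rw [hwright, erfc, integral_Ioi_gaussian]
  field_simp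
  ring
end

section
/- For every real z, the Wright function with parameters γ = −1/2, δ = 1/2 (the Mainardi function of order 1/2) satisfies W(−z; −1/2, 1/2) = (1/√π) exp(−z²/4), i.e. ∑_{k=0}^∞ (−z)^k / (k! Γ(−k/2 + 1/2)) = (1/√π) e^{−z²/4}. -/
open Real

/-!
For `γ = -1/2, δ = 1/2` the `k`-th term involves `Γ((1 - k)/2)`. At odd `k = 2m + 1` this is
`Γ(-m)`, a pole, so the term vanishes. At even `k = 2m` the recursion `Γ(s + 1) = s Γ(s)` gives
`(2m)! Γ(1/2 - m) = (-4)ᵐ m! √π`, so the term is `(-z²/4)ᵐ / (m! √π)`, and the remaining series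
is that of `exp(-z²/4) / √π`.
-/

open scoped Nat

theorem tsum_eq_tsum_two_mul_of_odd_eq_zero {α : Type*} [AddCommMonoid α] [TopologicalSpace α]
    {f : ℕ → α} (hf : ∀ m, f (2 * m + 1) = 0) : ∑' k, f k = ∑' m, f (2 * m) := by
  refine ((mul_right_injective₀ two_ne_zero).tsum_eq fun k hk => ?_).symm
  obtain ⟨m, rfl | rfl⟩ := k.even_or_odd'
  · exact ⟨m, rfl⟩
  · exact absurd (hf m) hk

theorem Real.exp_eq_tsum_div (x : ℝ) : exp x = ∑' n, x ^ n / n ! := by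
  rw [exp_eq_exp_ℝ, NormedSpace.exp_eq_tsum_div]

theorem Real.factorial_two_mul_mul_Gamma_half_sub_nat (m : ℕ) :
    ((2 * m)! : ℝ) * Gamma (1 / 2 - m) = (-4) ^ m * m ! * √π := by
  induction m with
  | zero => simp [-one_div, Gamma_one_half_eq]
  | succ m ih =>
    have hrec : Gamma (1 / 2 - m) = (1 / 2 - (m + 1)) * Gamma (1 / 2 - (m + 1)) := by
      rw [← Gamma_add_one]
      · ring_nf
      · linarith
    rw [show 2 * (m + 1) = 2 * m + 1 + 1 by ring]
    push_cast [Nat.factorial_succ]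
    linear_combination (-4 * (m + 1 : ℝ)) * ih + (4 * (m + 1) * ((2 * m)! : ℝ)) * hrec

theorem wright_neg_half_half_term_odd (x : ℝ) (m : ℕ) :
    x ^ (2 * m + 1) / (((2 * m + 1)! : ℝ) * Gamma (-(1 / 2) * ((2 * m + 1 : ℕ) : ℝ) + 1 / 2)) =
      0 := by
  have : -(1 / 2) * ((2 * m + 1 : ℕ) : ℝ) + 1 / 2 = -m := by push_cast; ring
  rw [this, Gamma_neg_nat_eq_zero, mul_zero, div_zero]

theorem wright_neg_half_half_term_even (x : ℝ) (m : ℕ) :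
    x ^ (2 * m) / (((2 * m)! : ℝ) * Gamma (-(1 / 2) * ((2 * m : ℕ) : ℝ) + 1 / 2)) =
      (-x ^ 2 / 4) ^ m / m ! / √π := by
  have : -(1 / 2) * ((2 * m : ℕ) : ℝ) + 1 / 2 = 1 / 2 - m := by push_cast; ring
  rw [this, factorial_two_mul_mul_Gamma_half_sub_nat, pow_mul,
    show -x ^ 2 / 4 = x ^ 2 / -4 by ring, div_pow]
  field_simp

/-- For every real `z`, `W(−z; −1/2, 1/2) = (1/√π) exp(−z²/4)`. -/
theorem wright_neg_half_half (z : ℝ) :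
    wright (-(1/2)) (1/2) (-z) = (1 / Real.sqrt π) * Real.exp (-z ^ 2 / 4) := by
  rw [wright, tsum_eq_tsum_two_mul_of_odd_eq_zero (wright_neg_half_half_term_odd (-z))]
  simp_rw [wright_neg_half_half_term_even, tsum_div_const, exp_eq_tsum_div, neg_sq]
  ring
end

section
/- Let γ > −1 and δ ∈ ℝ. The Wright function z ↦ W(z; γ, δ) is differentiable on ℝ and its derivative satisfies (d/dz) W(z; γ, δ) = W(z; γ, γ + δ) for every real z. -/
open Real

/-!
The Wright series is the power series `∑ cₙ zⁿ` with `cₙ = 1 / (n! Γ(γn + δ))`, and its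
coefficients satisfy `(n + 1) cₙ₊₁(γ, δ) = cₙ(γ, γ + δ)`; so the theorem is termwise
differentiation, which is legitimate as soon as `∑ |cₙ| rⁿ < ∞` for every `r`.

For that, the reflection formula gives `|1/Γ(x)| ≤ Γ(1 - x) ≤ Γ(2 - x)` for `x ≤ 0`, and
`1/Γ(x) ≤ x + 1` for `x > 0`, hence `|cₙ| rⁿ ≤ C Rⁿ Γ(αn + K) / n!` with `α = max (-γ) (1/2) < 1`
(this is where `γ > -1` enters). By log-convexity, `Γ(y + α) ≤ Γ(y) y^α`, so consecutive terms of
the majorant have ratio `O(n^(α - 1)) → 0`, and the ratio test applies.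
-/

open Filter Nat

namespace Real

theorem Gamma_add_le_mul_rpow {y a : ℝ} (hy : 0 < y) (ha₀ : 0 < a) (ha₁ : a < 1) :
    Gamma (y + a) ≤ Gamma y * y ^ a := by
  have hΓ : 0 < Gamma y := Gamma_pos_of_pos hy
  calc Gamma (y + a) = Gamma ((1 - a) * y + a * (y + 1)) := by ring_nf
    _ ≤ Gamma y ^ (1 - a) * Gamma (y + 1) ^ a :=
      Gamma_mul_add_mul_le_rpow_Gamma_mul_rpow_Gamma hy (by linarith) (by linarith) ha₀ (by ring)
    _ = Gamma y * y ^ a := by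
      rw [Gamma_add_one hy.ne', mul_rpow hy.le hΓ.le, mul_left_comm, ← rpow_add hΓ]
      norm_num [mul_comm]

theorem abs_inv_Gamma_le_Gamma_one_sub {x : ℝ} (hx : x ≤ 0) : |(Gamma x)⁻¹| ≤ Gamma (1 - x) := by
  have hΓ : 0 < Gamma (1 - x) := Gamma_pos_of_pos (by linarith)
  rcases eq_or_ne (Gamma x) 0 with h0 | h0
  · simp [h0, hΓ.le]
  have h := Gamma_mul_Gamma_one_sub x
  have hsin : sin (π * x) ≠ 0 := fun hs ↦ by
    rw [hs, div_zero] at h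
    exact mul_ne_zero h0 hΓ.ne' h
  rw [abs_inv, inv_le_iff_one_le_mul₀ (abs_pos.2 h0)]
  calc 1 ≤ π / |sin (π * x)| := by
        rw [le_div_iff₀ (abs_pos.2 hsin)]
        linarith [abs_sin_le_one (π * x), pi_gt_three]
    _ = Gamma (1 - x) * |Gamma x| := by
        rw [← abs_of_pos hΓ, ← abs_mul, mul_comm (Gamma _), h, abs_div, abs_of_pos pi_pos]

theorem inv_Gamma_le_add_one {x : ℝ} (hx : 0 < x) : (Gamma x)⁻¹ ≤ x + 1 := by
  have hΓ : 0 < Gamma x := Gamma_pos_of_pos hx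
  have hrec : Gamma (x + 2) = x * (x + 1) * Gamma x := by
    rw [show x + 2 = x + 1 + 1 by ring, Gamma_add_one (by linarith), Gamma_add_one hx.ne']; ring
  have one_le_Gamma {t : ℝ} (ht : 2 ≤ t) : 1 ≤ Gamma t :=
    Gamma_two ▸ Gamma_strictMonoOn_Ici.monotoneOn Set.self_mem_Ici ht ht
  rw [inv_le_iff_one_le_mul₀ hΓ]
  rcases le_total x 1 with h1 | h1
  · calc 1 ≤ Gamma (x + 2) := one_le_Gamma (by linarith)
      _ = x * (x + 1) * Gamma x := hrec
      _ ≤ (x + 1) * Gamma x := mul_le_mul_of_nonneg_right (by nlinarith) hΓ.le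
  · calc 1 ≤ Gamma (x + 1) := one_le_Gamma (by linarith)
      _ = x * Gamma x := Gamma_add_one hx.ne'
      _ ≤ (x + 1) * Gamma x := mul_le_mul_of_nonneg_right (by linarith) hΓ.le

theorem abs_inv_Gamma_le (x : ℝ) : |(Gamma x)⁻¹| ≤ (|x| + 1) * Gamma (2 - min x 0) := by
  rcases le_total x 0 with hx | hx
  · have hrec : Gamma (2 - x) = (1 - x) * Gamma (1 - x) := by
      rw [show 2 - x = 1 - x + 1 by ring, Gamma_add_one (by linarith)]
    have hΓ : 0 < Gamma (1 - x) := Gamma_pos_of_pos (by linarith)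
    rw [min_eq_left hx, hrec, abs_of_nonpos hx]
    calc |(Gamma x)⁻¹| ≤ Gamma (1 - x) := abs_inv_Gamma_le_Gamma_one_sub hx
      _ ≤ (-x + 1) * (1 - x) * Gamma (1 - x) := le_mul_of_one_le_left hΓ.le (by nlinarith)
      _ = _ := by ring
  · rcases hx.eq_or_lt with rfl | hx
    · simp
    rw [min_eq_right hx.le, sub_zero, Gamma_two, mul_one, abs_of_pos hx,
      abs_of_pos (inv_pos.2 (Gamma_pos_of_pos hx))]
    exact inv_Gamma_le_add_one hx

theorem summable_pow_mul_Gamma_div_factorial {α K : ℝ} (hα₀ : 0 < α) (hα₁ : α < 1) (hK : 0 < K)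
    (r : ℝ) : Summable fun n : ℕ ↦ r ^ n * Gamma (α * n + K) / n ! := by
  have hgrowth : ∀ᶠ n : ℕ in atTop, 2 * |r| * (α * n + K) ^ α ≤ n + 1 := by
    have hlin : Tendsto (fun n : ℕ ↦ α * n + K) atTop atTop :=
      tendsto_atTop_add_const_right _ K (tendsto_natCast_atTop_atTop.const_mul_atTop hα₀)
    have hpow := (tendsto_rpow_atTop (sub_pos.2 hα₁)).comp hlin
    filter_upwards [hpow.eventually_ge_atTop (2 * |r| * (K + 1))] with n hn
    have hy : 0 < α * n + K := by positivity
    refine le_of_mul_le_mul_left ?_ (by linarith : 0 < K + 1)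
    calc (K + 1) * (2 * |r| * (α * n + K) ^ α)
        = 2 * |r| * (K + 1) * (α * n + K) ^ α := by ring
      _ ≤ (α * n + K) ^ (1 - α) * (α * n + K) ^ α := by gcongr; exact hn
      _ = α * n + K := by rw [← rpow_add hy]; simp
      _ ≤ (K + 1) * (n + 1) := by nlinarith [(n.cast_nonneg : (0 : ℝ) ≤ n)]
  refine summable_of_ratio_norm_eventually_le (r := 1 / 2) (by norm_num) ?_
  filter_upwards [hgrowth] with n hn
  have hy : 0 < α * n + K := by positivity
  have hΓ : 0 < Gamma (α * n + K) := Gamma_pos_of_pos hy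
  have hstep : Gamma (α * ↑(n + 1) + K) ≤ Gamma (α * n + K) * (α * n + K) ^ α := by
    rw [show α * ((n + 1 : ℕ) : ℝ) + K = α * n + K + α by push_cast; ring]
    exact Gamma_add_le_mul_rpow hy hα₀ hα₁
  have hΓ' : 0 < Gamma (α * ↑(n + 1) + K) := Gamma_pos_of_pos (by positivity)
  simp only [norm_div, norm_mul, norm_pow, Real.norm_eq_abs, abs_of_pos hΓ, abs_of_pos hΓ',
    Nat.abs_cast, factorial_succ, Nat.cast_mul]
  have hn1 : (0 : ℝ) < n + 1 := by positivity
  calc |r| ^ (n + 1) * Gamma (α * ↑(n + 1) + K) / (↑(n + 1) * ↑n !)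
      ≤ |r| ^ (n + 1) * (Gamma (α * n + K) * (α * n + K) ^ α) / (↑(n + 1) * ↑n !) := by gcongr
    _ = |r| ^ n * Gamma (α * n + K) / n ! * (|r| * (α * n + K) ^ α / (n + 1)) := by
        push_cast; field_simp; ring
    _ ≤ |r| ^ n * Gamma (α * n + K) / n ! * (1 / 2) :=
        mul_le_mul_of_nonneg_left (by rw [div_le_iff₀ hn1]; linarith) (by positivity)
    _ = 1 / 2 * (|r| ^ n * Gamma (α * n + K) / n !) := mul_comm _ _

end Real

theorem hasDerivAt_tsum_mul_pow {𝕜 : Type*} [RCLike 𝕜] {c : ℕ → 𝕜}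
    (hc : ∀ r : ℝ, 0 ≤ r → Summable fun n ↦ ‖c n‖ * r ^ n) (z : 𝕜) :
    HasDerivAt (fun x ↦ ∑' n, c n * x ^ n) (∑' n, (n + 1) * c (n + 1) * z ^ n) z := by
  set r := ‖z‖ + 1
  have hr : 1 ≤ r := le_add_of_nonneg_left (norm_nonneg z)
  have hterm (n : ℕ) (y : 𝕜) : HasDerivAt (fun x ↦ c n * x ^ n) (c n * (n * y ^ (n - 1))) y :=
    (hasDerivAt_pow n y).const_mul (c n)
  -- `n ≤ 2 ^ n` trades the factor `n` of the derivative for a larger radius.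
  have hbound (n : ℕ) (y : 𝕜) (hy : y ∈ Metric.ball 0 r) :
      ‖c n * (n * y ^ (n - 1))‖ ≤ ‖c n‖ * (2 * r) ^ n := by
    have hyr : ‖y‖ ≤ r := by simpa using (Metric.mem_ball.1 hy).le
    rw [norm_mul, norm_mul, norm_pow, RCLike.norm_natCast, mul_pow]
    gcongr
    · exact_mod_cast n.lt_two_pow_self.le
    · calc ‖y‖ ^ (n - 1) ≤ r ^ (n - 1) := by gcongr
        _ ≤ r ^ n := pow_le_pow_right₀ hr (n.sub_le 1)
  have hz : z ∈ Metric.ball (0 : 𝕜) r := by simp [r]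
  have hsum₀ : Summable fun n ↦ c n * (0 : 𝕜) ^ n :=
    summable_of_ne_finset_zero (s := {0}) fun n hn ↦ by simp_all
  have hu := hc (2 * r) (by positivity)
  refine (hasDerivAt_tsum_of_isPreconnected hu Metric.isOpen_ball
    (convex_ball 0 r).isPreconnected (fun n y _ ↦ hterm n y) hbound
    (Metric.mem_ball_self (by positivity)) hsum₀ hz).congr_deriv ?_
  rw [(hu.of_norm_bounded fun n ↦ hbound n z hz).tsum_eq_zero_add]
  simp only [Nat.cast_zero, zero_mul, mul_zero, zero_add, Nat.add_sub_cancel, Nat.cast_succ]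
  exact tsum_congr fun n ↦ by ring

noncomputable def wrightCoeff (γ δ : ℝ) (n : ℕ) : ℝ := ((n ! : ℝ) * Gamma (γ * n + δ))⁻¹

theorem wright_eq_tsum (γ δ z : ℝ) : wright γ δ z = ∑' n, wrightCoeff γ δ n * z ^ n :=
  tsum_congr fun _ ↦ div_eq_inv_mul _ _

theorem succ_mul_wrightCoeff_succ (γ δ : ℝ) (n : ℕ) :
    (n + 1) * wrightCoeff γ δ (n + 1) = wrightCoeff γ (γ + δ) n := by
  have hn : (n + 1 : ℝ) ≠ 0 := n.cast_add_one_ne_zero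
  rw [wrightCoeff, wrightCoeff, factorial_succ, Nat.cast_mul, Nat.cast_succ,
    show γ * (n + 1 : ℝ) + δ = γ * n + (γ + δ) by ring, mul_assoc, mul_inv, ← mul_assoc,
    mul_inv_cancel₀ hn, one_mul]

theorem abs_wrightCoeff_le {γ α : ℝ} (hα : 0 ≤ α) (hγα : -γ ≤ α) (δ : ℝ) (n : ℕ) :
    |wrightCoeff γ δ n| ≤ (|δ| + 1) * (|γ| + 1) ^ n * Gamma (α * n + (|δ| + 2)) / n ! := by
  set x := γ * n + δ
  have hn : (0 : ℝ) ≤ n := n.cast_nonneg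
  have hmin : min x 0 ≤ 0 := min_le_right x 0
  have hpoly : |x| + 1 ≤ (|δ| + 1) * (|γ| + 1) ^ n := by
    have hbern : 1 + n * |γ| ≤ (1 + |γ|) ^ n := one_add_mul_le_pow (by linarith [abs_nonneg γ]) n
    calc |x| + 1 ≤ n * |γ| + |δ| + 1 := by
          grw [abs_add_le, abs_mul, Nat.abs_cast]; linarith [mul_comm (n : ℝ) |γ|]
      _ ≤ (|δ| + 1) * (1 + n * |γ|) := by
          nlinarith [mul_nonneg (abs_nonneg δ) (mul_nonneg hn (abs_nonneg γ))]
      _ ≤ (|δ| + 1) * (|γ| + 1) ^ n := by rw [add_comm |γ|]; gcongr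
  have hΓ : Gamma (2 - min x 0) ≤ Gamma (α * n + (|δ| + 2)) := by
    have harg : 2 - min x 0 ≤ α * n + (|δ| + 2) := by
      have hγn : -γ * n ≤ α * n := mul_le_mul_of_nonneg_right hγα hn
      rw [sub_le_comm, le_min_iff]
      constructor <;> linarith [neg_abs_le δ, abs_nonneg δ, mul_nonneg hα hn]
    exact Gamma_strictMonoOn_Ici.monotoneOn (by simp [hmin]) (by simp; linarith) harg
  rw [wrightCoeff, mul_inv, abs_mul, abs_inv, Nat.abs_cast, inv_mul_eq_div]
  gcongr
  calc |(Gamma x)⁻¹| ≤ (|x| + 1) * Gamma (2 - min x 0) := abs_inv_Gamma_le x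
    _ ≤ _ := mul_le_mul hpoly hΓ (Gamma_pos_of_pos (by linarith)).le (by positivity)

theorem summable_wrightCoeff_mul_pow {γ : ℝ} (hγ : -1 < γ) (δ r : ℝ) :
    Summable fun n ↦ ‖wrightCoeff γ δ n‖ * r ^ n := by
  set α := max (-γ) (1 / 2)
  have hmajor := (summable_pow_mul_Gamma_div_factorial (α := α) (K := |δ| + 2)
    (lt_max_of_lt_right (by norm_num)) (max_lt (by linarith) (by norm_num)) (by positivity)
    ((|γ| + 1) * |r|)).mul_left (|δ| + 1)
  refine hmajor.of_norm_bounded fun n ↦ ?_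
  rw [norm_mul, norm_norm, norm_pow, Real.norm_eq_abs, Real.norm_eq_abs]
  calc |wrightCoeff γ δ n| * |r| ^ n
      ≤ (|δ| + 1) * (|γ| + 1) ^ n * Gamma (α * n + (|δ| + 2)) / n ! * |r| ^ n := by
        gcongr
        exact abs_wrightCoeff_le (by positivity) (le_max_left _ _) δ n
    _ = _ := by rw [mul_pow]; ring

/-- For `γ > −1`, the Wright function `z ↦ W(z; γ, δ)` is differentiable on `ℝ`
with `(d/dz) W(z; γ, δ) = W(z; γ, γ + δ)`. -/
theorem wright_hasDerivAt (γ δ : ℝ) (hγ : -1 < γ) (z : ℝ) :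
    HasDerivAt (fun z => wright γ δ z) (wright γ (γ + δ) z) z := by
  simp only [wright_eq_tsum, ← succ_mul_wrightCoeff_succ]
  exact hasDerivAt_tsum_mul_pow (fun r _ ↦ summable_wrightCoeff_mul_pow hγ δ r) z
end

section
/- Let κ₁, κ₂, λ₁, λ₂ > 0 and c ∈ ℝ, with erfc(p/(2√κ₁)) ≠ 1 and erfc(p/(2√κ₂)) ≠ 0. Suppose p > 0 satisfies p/2 = λ₂ c · exp(−p²/(4κ₂)) / (√(πκ₂) · erfc(p/(2√κ₂))) − λ₁ · exp(−p²/(4κ₁)) / (√(πκ₁) · (erfc(p/(2√κ₁)) − 1)). Define S(τ) = p √τ, u₁(x, τ) = 1 − (erfc(x/(2√(κ₁τ))) − 1)/(erfc(p/(2√κ₁)) − 1), and u₂(x, τ) = c · (erfc(p/(2√κ₂)) − erfc(x/(2√(κ₂τ))))/erfc(p/(2√κ₂)). Then for every τ > 0 the classical Stefan condition holds: S′(τ) = λ₂ (∂u₂/∂x)(S(τ), τ) − λ₁ (∂u₁/∂x)(S(τ), τ). -/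
/-!
At the front `x = p√τ` the similarity variable `x / (2√(κτ))` equals the constant `p / (2√κ)`,
so both heat fluxes `∂ₓ u(p√τ, τ)` are constant multiples of `1 / √τ`, as is `S'(τ) = p / (2√τ)`.
The Stefan condition is therefore the transcendental equation for `p` divided by `√τ`.
-/

open Real MeasureTheory

/-- Classical liquid-phase temperature
`u₁(x, τ) = 1 − (erfc(x/(2√(κ₁τ))) − 1)/(erfc(p/(2√κ₁)) − 1)`. -/
noncomputable def classicalLiquid (κ₁ p x τ : ℝ) : ℝ :=
  1 - (erfc (x / (2 * Real.sqrt (κ₁ * τ))) - 1) / (erfc (p / (2 * Real.sqrt κ₁)) - 1)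

/-- Classical solid-phase temperature
`u₂(x, τ) = c (erfc(p/(2√κ₂)) − erfc(x/(2√(κ₂τ))))/erfc(p/(2√κ₂))`. -/
noncomputable def classicalSolid (κ₂ p c x τ : ℝ) : ℝ :=
  c * (erfc (p / (2 * Real.sqrt κ₂)) - erfc (x / (2 * Real.sqrt (κ₂ * τ)))) /
    erfc (p / (2 * Real.sqrt κ₂))

theorem hasDerivAt_integral_Ioi {E : Type*} [NormedAddCommGroup E] [NormedSpace ℝ E]
    [CompleteSpace E] {f : ℝ → E} {z : ℝ} (hf : Integrable f) (hfz : ContinuousAt f z) :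
    HasDerivAt (fun w => ∫ t in Set.Ioi w, f t) (-f z) z := by
  have hsplit : (fun w => ∫ t in Set.Ioi w, f t) =
      fun w => (∫ t in Set.Ioi z, f t) - ∫ t in z..w, f t := by
    ext w
    rw [← intervalIntegral.integral_Ioi_sub_Ioi' hf.integrableOn hf.integrableOn, sub_sub_cancel]
  rw [hsplit, ← zero_sub]
  exact (hasDerivAt_const z _).sub <| intervalIntegral.integral_hasDerivAt_right
    hf.intervalIntegrable hf.aestronglyMeasurable.stronglyMeasurableAtFilter hfz

theorem hasDerivAt_erfc (z : ℝ) :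
    HasDerivAt erfc (-(2 / √π * exp (-z ^ 2))) z := by
  have hint : Integrable fun t : ℝ => exp (-t ^ 2) := by
    simpa using integrable_exp_neg_mul_sq one_pos
  have h := (hasDerivAt_integral_Ioi (z := z) hint (by fun_prop)).const_mul (2 / √π)
  rwa [mul_neg] at h

theorem hasDerivAt_erfc_div (a x : ℝ) :
    HasDerivAt (fun y => erfc (y / a)) (-(2 / √π * exp (-(x / a) ^ 2)) / a) x := by
  exact ((hasDerivAt_erfc (x / a)).comp x ((hasDerivAt_id x).div_const a)).congr_deriv
    (mul_one_div _ _)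

theorem hasDerivAt_classicalLiquid (κ₁ p x τ : ℝ) :
    HasDerivAt (fun y => classicalLiquid κ₁ p y τ)
      (2 / √π * exp (-(x / (2 * √(κ₁ * τ))) ^ 2) / (2 * √(κ₁ * τ)) /
        (erfc (p / (2 * √κ₁)) - 1)) x :=
  ((((hasDerivAt_erfc_div _ x).sub_const 1).div_const _).const_sub 1).congr_deriv
    (by ring)

theorem hasDerivAt_classicalSolid (κ₂ p c x τ : ℝ) :
    HasDerivAt (fun y => classicalSolid κ₂ p c y τ)
      (c * (2 / √π * exp (-(x / (2 * √(κ₂ * τ))) ^ 2) / (2 * √(κ₂ * τ))) /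
        erfc (p / (2 * √κ₂))) x :=
  ((((hasDerivAt_erfc_div _ x).const_sub _).const_mul c).div_const _).congr_deriv
    (by ring)

theorem mul_sqrt_div_two_mul_sqrt_mul {κ τ : ℝ} (hτ : 0 < τ) (p : ℝ) :
    p * √τ / (2 * √(κ * τ)) = p / (2 * √κ) := by
  have : √τ ≠ 0 := by positivity
  rw [Real.sqrt_mul' κ hτ.le]
  field_simp

theorem neg_div_two_mul_sqrt_sq {κ : ℝ} (hκ : 0 < κ) (p : ℝ) :
    -(p / (2 * √κ)) ^ 2 = -p ^ 2 / (4 * κ) := by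
  rw [div_pow, mul_pow, Real.sq_sqrt hκ.le]
  ring

theorem classical_stefan_condition_general (κ₁ κ₂ lam₁ lam₂ c p : ℝ)
    (hκ₁ : 0 < κ₁) (hκ₂ : 0 < κ₂)
    (htrans : p / 2 =
        lam₂ * c * Real.exp (-p ^ 2 / (4 * κ₂)) /
            (Real.sqrt (π * κ₂) * erfc (p / (2 * Real.sqrt κ₂))) -
          lam₁ * Real.exp (-p ^ 2 / (4 * κ₁)) /
            (Real.sqrt (π * κ₁) * (erfc (p / (2 * Real.sqrt κ₁)) - 1)))
    (S : ℝ → ℝ) (hS : ∀ τ : ℝ, 0 ≤ τ → S τ = p * Real.sqrt τ) :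
    ∀ τ : ℝ, 0 < τ →
      deriv S τ =
        lam₂ * deriv (fun y => classicalSolid κ₂ p c y τ) (S τ) -
          lam₁ * deriv (fun y => classicalLiquid κ₁ p y τ) (S τ) := by
  intro τ hτ
  have hS_near : S =ᶠ[nhds τ] fun t => p * √t :=
    Filter.eventually_of_mem (Ioi_mem_nhds hτ) fun t ht => hS t ht.le
  have hS' : deriv S τ = p * (1 / (2 * √τ)) := by
    rw [hS_near.deriv_eq]
    exact ((hasDerivAt_sqrt hτ.ne').const_mul p).deriv
  rw [hS', (hasDerivAt_classicalSolid κ₂ p c _ τ).deriv,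
    (hasDerivAt_classicalLiquid κ₁ p _ τ).deriv, hS τ hτ.le, mul_sqrt_div_two_mul_sqrt_mul hτ,
    mul_sqrt_div_two_mul_sqrt_mul hτ, neg_div_two_mul_sqrt_sq hκ₁, neg_div_two_mul_sqrt_sq hκ₂,
    sqrt_mul' _ hτ.le, sqrt_mul' _ hτ.le]
  -- `ring` treats `(a * (b - 1))⁻¹` as an atom, so the factor `erfc … - 1` is split off first.
  rw [sqrt_mul pi_pos.le, sqrt_mul pi_pos.le, ← div_div _ _ (_ - 1)] at htrans
  linear_combination htrans / √τ

/-- If `p > 0` solves the classical transcendental equation, then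
`S(τ) = p√τ`, `u₁`, `u₂` satisfy the classical Stefan condition
`S'(τ) = λ₂ ∂u₂/∂x(S(τ), τ) − λ₁ ∂u₁/∂x(S(τ), τ)` for every `τ > 0`. -/
theorem classical_stefan_condition (κ₁ κ₂ lam₁ lam₂ c p : ℝ)
    (hκ₁ : 0 < κ₁) (hκ₂ : 0 < κ₂) (hlam₁ : 0 < lam₁) (hlam₂ : 0 < lam₂) (hp : 0 < p)
    (hE₁ : erfc (p / (2 * Real.sqrt κ₁)) ≠ 1)
    (hE₂ : erfc (p / (2 * Real.sqrt κ₂)) ≠ 0)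
    (htrans : p / 2 =
        lam₂ * c * Real.exp (-p ^ 2 / (4 * κ₂)) /
            (Real.sqrt (π * κ₂) * erfc (p / (2 * Real.sqrt κ₂))) -
          lam₁ * Real.exp (-p ^ 2 / (4 * κ₁)) /
            (Real.sqrt (π * κ₁) * (erfc (p / (2 * Real.sqrt κ₁)) - 1)))
    (S : ℝ → ℝ) (hS : ∀ τ : ℝ, 0 ≤ τ → S τ = p * Real.sqrt τ) :
    ∀ τ : ℝ, 0 < τ →
      deriv S τ =
        lam₂ * deriv (fun y => classicalSolid κ₂ p c y τ) (S τ) -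
          lam₁ * deriv (fun y => classicalLiquid κ₁ p y τ) (S τ) :=
  classical_stefan_condition_general κ₁ κ₂ lam₁ lam₂ c p hκ₁ hκ₂ htrans S hS
end

section
/- Let 0 < α < 1, κ > 0, p > 0, T > 0. Let w : [0, 1] × [0, T] → ℝ be such that w is continuously differentiable in τ on (0, T], twice continuously differentiable in v, with ∂w/∂τ, (1/ξ) ∂w/∂v and ξ^{−α} ∂²w/∂v² all integrable in the time variable on (0, τ) for each τ ∈ (0, T] and v ∈ (0, 1), and w(v, τ) → w(v, 0) as τ → 0⁺. Suppose w satisfies, for all v ∈ (0, 1) and τ ∈ (0, T], the transformed subdiffusion equation (1/Γ(1−α)) ∫₀^τ (τ−ξ)^{−α} (∂w/∂ξ)(v, ξ) dξ − (α v/(2Γ(1−α))) ∫₀^τ (τ−ξ)^{−α} ξ^{−1} (∂w/∂v)(v, ξ) dξ = (κ/(p² τ^α)) (∂²w/∂v²)(v, τ). Then w also satisfies, for all v ∈ (0, 1) and τ ∈ (0, T], the integro-differential equation w(v, τ) = w(v, 0) + (α v/2) ∫₀^τ ξ^{−1} (∂w/∂v)(v, ξ) dξ + (κ/(p² Γ(α)))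 ∫₀^τ (τ−ξ)^{α−1} ξ^{−α} (∂²w/∂v²)(v, ξ) dξ. -/
/-!
Write `I^a` for the Riemann–Liouville integral. With `F = ∂w/∂τ` and `G = ξ⁻¹ ∂w/∂v`, the
subdiffusion equation reads `I^(1-α) F - (α v / 2) I^(1-α) G = κ p⁻² τ^(-α) ∂²w/∂v²`. Applying
`I^α` and using the semigroup law `I^α I^(1-α) = I^1` (Fubini on the triangle `0 < ξ < s < τ`,
the inner `s`-integral being the Beta integral `B(α, 1-α) = Γ(α) Γ(1-α)`) leaves
`∫₀^τ F - (α v / 2) ∫₀^τ G`, and `∫₀^τ F = w(v, τ) - w(v, 0)` by the fundamental theorem of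
calculus, which applies up to `0` because `w(v, ·)` is continuous from the right there.
-/

open Real MeasureTheory Filter Set intervalIntegral ProbabilityTheory Topology

theorem integral_rpow_mul_one_sub_rpow {a b : ℝ} (ha : 0 < a) (hb : 0 < b) :
    ∫ t in (0:ℝ)..1, t ^ (a - 1) * (1 - t) ^ (b - 1) = beta a b := by
  have h := lintegral_betaPDF_eq_one ha hb
  rw [lintegral_betaPDF, ← ENNReal.toReal_eq_one_iff, ← integral_toReal (by fun_prop)
    (ae_of_all _ fun _ => ENNReal.ofReal_lt_top)] at h
  have hnonneg : ∀ t ∈ Ioo (0:ℝ) 1, 0 ≤ 1 / beta a b * t ^ (a - 1) * (1 - t) ^ (b - 1) :=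
    fun t ht => by
      have := beta_pos ha hb
      have := rpow_nonneg ht.1.le (a - 1)
      have := rpow_nonneg (sub_nonneg.2 ht.2.le) (b - 1)
      positivity
  rw [setIntegral_congr_fun measurableSet_Ioo fun t ht =>
    ENNReal.toReal_ofReal (hnonneg t ht)] at h
  simp only [mul_assoc] at h
  rw [MeasureTheory.integral_const_mul, ← integral_Ioc_eq_integral_Ioo,
    ← integral_of_le zero_le_one, one_div, inv_mul_eq_one₀ (beta_pos ha hb).ne'] at h
  exact h.symm

theorem integral_sub_rpow_mul_rpow_sub {a b ξ τ : ℝ} (ha : 0 < a) (hb : 0 < b)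
    (hξτ : ξ < τ) :
    ∫ s in ξ..τ, (τ - s) ^ (a - 1) * (s - ξ) ^ (b - 1) = (τ - ξ) ^ (a + b - 1) * beta a b := by
  set c := τ - ξ
  have hc : 0 < c := sub_pos.2 hξτ
  have hsub := integral_comp_sub_mul (a := 0) (b := 1)
    (fun s => (τ - s) ^ (a - 1) * (s - ξ) ^ (b - 1)) hc.ne' τ
  simp only [mul_zero, sub_zero, mul_one, show τ - c = ξ by ring] at hsub
  rw [eq_inv_smul_iff₀ hc.ne'] at hsub
  rw [← hsub, smul_eq_mul, ← integral_rpow_mul_one_sub_rpow ha hb,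
    ← intervalIntegral.integral_const_mul, ← intervalIntegral.integral_const_mul]
  refine integral_congr fun t ht => ?_
  rw [uIcc_of_le zero_le_one] at ht
  simp only [show τ - (τ - c * t) = c * t by ring, show τ - c * t - ξ = c * (1 - t) by ring]
  rw [mul_rpow hc.le ht.1, mul_rpow hc.le (sub_nonneg.2 ht.2),
    show a + b - 1 = 1 + (a - 1) + (b - 1) by ring, rpow_add hc, rpow_add hc, rpow_one]
  ring

section IteratedIntegral

variable {a b τ : ℝ} {f : ℝ → ℝ}

noncomputable def iteratedRLIntegrand (a b τ : ℝ) (f : ℝ → ℝ) : ℝ × ℝ → ℝ :=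
  {q | q.2 < q.1}.indicator fun q => (τ - q.1) ^ (a - 1) * ((q.1 - q.2) ^ (b - 1) * f q.2)

theorem iteratedRLIntegrand_apply_eq_indicator_Iio (s ξ : ℝ) :
    iteratedRLIntegrand a b τ f (s, ξ) =
      (Iio s).indicator (fun ξ => (τ - s) ^ (a - 1) * ((s - ξ) ^ (b - 1) * f ξ)) ξ := by
  simp [iteratedRLIntegrand, indicator_apply]

theorem iteratedRLIntegrand_apply_eq_indicator_Ioi (s ξ : ℝ) :
    iteratedRLIntegrand a b τ f (s, ξ) =
      (Ioi ξ).indicator (fun s => (τ - s) ^ (a - 1) * (s - ξ) ^ (b - 1)) s * f ξ := by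
  simp [iteratedRLIntegrand, indicator_apply, mul_assoc]

theorem setIntegral_Ioo_indicator_Ioi_rpow_mul_rpow (ha : 0 < a) (hb : 0 < b) {ξ : ℝ}
    (hξ : ξ ∈ Ioo 0 τ) :
    ∫ s in Ioo 0 τ, (Ioi ξ).indicator (fun s => (τ - s) ^ (a - 1) * (s - ξ) ^ (b - 1)) s =
      (τ - ξ) ^ (a + b - 1) * beta a b := by
  rw [MeasureTheory.integral_indicator measurableSet_Ioi,
    Measure.restrict_restrict measurableSet_Ioi, Ioi_inter_Ioo, max_eq_left hξ.1.le,
    ← integral_Ioc_eq_integral_Ioo, ← integral_of_le hξ.2.le,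
    integral_sub_rpow_mul_rpow_sub ha hb hξ.2]

theorem integrableOn_Ioo_indicator_Ioi_rpow_mul_rpow (ha : 0 < a) (hb : 0 < b) {ξ : ℝ}
    (hξ : ξ ∈ Ioo 0 τ) :
    IntegrableOn ((Ioi ξ).indicator fun s => (τ - s) ^ (a - 1) * (s - ξ) ^ (b - 1)) (Ioo 0 τ) :=
  -- a non-integrable function has Bochner integral `0`
  Integrable.of_integral_ne_zero <| by
    rw [setIntegral_Ioo_indicator_Ioi_rpow_mul_rpow ha hb hξ]
    exact (mul_pos (rpow_pos_of_pos (sub_pos.2 hξ.2) _) (beta_pos ha hb)).ne'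

theorem setIntegral_iteratedRLIntegrand_left {s : ℝ} (hs : s ∈ Ioo 0 τ) :
    ∫ ξ in Ioo 0 τ, iteratedRLIntegrand a b τ f (s, ξ) =
      (τ - s) ^ (a - 1) * ∫ ξ in (0:ℝ)..s, (s - ξ) ^ (b - 1) * f ξ := by
  simp_rw [iteratedRLIntegrand_apply_eq_indicator_Iio]
  rw [MeasureTheory.integral_indicator measurableSet_Iio,
    Measure.restrict_restrict measurableSet_Iio, Iio_inter_Ioo, min_eq_left hs.2.le,
    MeasureTheory.integral_const_mul, ← integral_Ioc_eq_integral_Ioo, ← integral_of_le hs.1.le]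

theorem setIntegral_iteratedRLIntegrand_right (ha : 0 < a) (hb : 0 < b) {ξ : ℝ}
    (hξ : ξ ∈ Ioo 0 τ) :
    ∫ s in Ioo 0 τ, iteratedRLIntegrand a b τ f (s, ξ) =
      beta a b * ((τ - ξ) ^ (a + b - 1) * f ξ) := by
  simp_rw [iteratedRLIntegrand_apply_eq_indicator_Ioi]
  rw [MeasureTheory.integral_mul_const, setIntegral_Ioo_indicator_Ioi_rpow_mul_rpow ha hb hξ]
  ring

theorem setIntegral_norm_iteratedRLIntegrand_right (ha : 0 < a) (hb : 0 < b) {ξ : ℝ}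
    (hξ : ξ ∈ Ioo 0 τ) :
    ∫ s in Ioo 0 τ, ‖iteratedRLIntegrand a b τ f (s, ξ)‖ =
      beta a b * ‖(τ - ξ) ^ (a + b - 1) * f ξ‖ := by
  have hnonneg : ∀ s ∈ Ioo 0 τ,
      0 ≤ (Ioi ξ).indicator (fun s => (τ - s) ^ (a - 1) * (s - ξ) ^ (b - 1)) s :=
    fun s hs => indicator_apply_nonneg fun hs' => mul_nonneg
      (rpow_nonneg (sub_nonneg.2 hs.2.le) _) (rpow_nonneg (sub_nonneg.2 (le_of_lt hs')) _)
  rw [setIntegral_congr_fun measurableSet_Ioo fun s hs => by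
      rw [iteratedRLIntegrand_apply_eq_indicator_Ioi, norm_mul,
        Real.norm_of_nonneg (hnonneg s hs)],
    MeasureTheory.integral_mul_const, setIntegral_Ioo_indicator_Ioi_rpow_mul_rpow ha hb hξ,
    norm_mul, Real.norm_of_nonneg (rpow_nonneg (sub_nonneg.2 hξ.2.le) _)]
  ring

theorem integrable_iteratedRLIntegrand (ha : 0 < a) (hb : 0 < b)
    (hf : AEStronglyMeasurable f (volume.restrict (Ioo 0 τ)))
    (hfab : IntegrableOn (fun ξ => (τ - ξ) ^ (a + b - 1) * f ξ) (Ioo 0 τ)) :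
    Integrable (iteratedRLIntegrand a b τ f)
      ((volume.restrict (Ioo 0 τ)).prod (volume.restrict (Ioo 0 τ))) := by
  have hmeas : AEStronglyMeasurable (iteratedRLIntegrand a b τ f)
      ((volume.restrict (Ioo 0 τ)).prod (volume.restrict (Ioo 0 τ))) :=
    (((by fun_prop : Measurable fun q : ℝ × ℝ => (τ - q.1) ^ (a - 1) * (q.1 - q.2) ^ (b - 1))
      ).aestronglyMeasurable.mul hf.comp_snd).indicator
      (measurableSet_lt measurable_snd measurable_fst) |>.congr (ae_of_all _ fun q => by
        simp [iteratedRLIntegrand, indicator_apply, mul_assoc])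
  refine (integrable_prod_iff' hmeas).2 ⟨?_, ?_⟩
  · filter_upwards [ae_restrict_mem measurableSet_Ioo] with ξ hξ
    simp_rw [iteratedRLIntegrand_apply_eq_indicator_Ioi]
    exact (integrableOn_Ioo_indicator_Ioi_rpow_mul_rpow ha hb hξ).mul_const (f ξ)
  · refine (hfab.norm.const_mul (beta a b)).congr ?_
    filter_upwards [ae_restrict_mem measurableSet_Ioo] with ξ hξ
    exact (setIntegral_norm_iteratedRLIntegrand_right ha hb hξ).symm

theorem integral_rpow_mul_integral_rpow_mul (ha : 0 < a) (hb : 0 < b)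
    (hf : AEStronglyMeasurable f (volume.restrict (Ioo 0 τ)))
    (hfab : IntegrableOn (fun ξ => (τ - ξ) ^ (a + b - 1) * f ξ) (Ioo 0 τ)) :
    IntegrableOn (fun s => (τ - s) ^ (a - 1) * ∫ ξ in (0:ℝ)..s, (s - ξ) ^ (b - 1) * f ξ)
        (Ioo 0 τ) ∧
      ∫ s in Ioo 0 τ, (τ - s) ^ (a - 1) * ∫ ξ in (0:ℝ)..s, (s - ξ) ^ (b - 1) * f ξ =
        beta a b * ∫ ξ in Ioo 0 τ, (τ - ξ) ^ (a + b - 1) * f ξ := by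
  have hK := integrable_iteratedRLIntegrand ha hb hf hfab
  have hleft : EqOn (fun s => ∫ ξ in Ioo 0 τ, iteratedRLIntegrand a b τ f (s, ξ))
      (fun s => (τ - s) ^ (a - 1) * ∫ ξ in (0:ℝ)..s, (s - ξ) ^ (b - 1) * f ξ) (Ioo 0 τ) :=
    fun s hs => setIntegral_iteratedRLIntegrand_left hs
  refine ⟨IntegrableOn.congr_fun hK.integral_prod_left hleft measurableSet_Ioo, ?_⟩
  rw [← setIntegral_congr_fun measurableSet_Ioo hleft,
    integral_integral_swap (f := fun s ξ => iteratedRLIntegrand a b τ f (s, ξ)) hK,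
    ← MeasureTheory.integral_const_mul]
  exact setIntegral_congr_fun measurableSet_Ioo fun ξ hξ =>
    setIntegral_iteratedRLIntegrand_right ha hb hξ

end IteratedIntegral

noncomputable def riemannLiouvilleIntegral (a : ℝ) (f : ℝ → ℝ) (t : ℝ) : ℝ :=
  (Gamma a)⁻¹ * ∫ u in (0:ℝ)..t, (t - u) ^ (a - 1) * f u

section RiemannLiouville

variable {a b t : ℝ} {f g : ℝ → ℝ}

theorem riemannLiouvilleIntegral_one (f : ℝ → ℝ) (t : ℝ) :
    riemannLiouvilleIntegral 1 f t = ∫ u in (0:ℝ)..t, f u := by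
  simp [riemannLiouvilleIntegral]

theorem riemannLiouvilleIntegral_const_mul (c : ℝ) :
    riemannLiouvilleIntegral a (fun u => c * f u) t = c * riemannLiouvilleIntegral a f t := by
  simp only [riemannLiouvilleIntegral, mul_left_comm _ c, intervalIntegral.integral_const_mul]

theorem riemannLiouvilleIntegral_sub
    (hf : IntervalIntegrable (fun u => (t - u) ^ (a - 1) * f u) volume 0 t)
    (hg : IntervalIntegrable (fun u => (t - u) ^ (a - 1) * g u) volume 0 t) :
    riemannLiouvilleIntegral a (fun u => f u - g u) t =
      riemannLiouvilleIntegral a f t - riemannLiouvilleIntegral a g t := by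
  simp only [riemannLiouvilleIntegral, mul_sub, intervalIntegral.integral_sub hf hg]

theorem riemannLiouvilleIntegral_congr (ht : 0 ≤ t) (h : EqOn f g (Ioc 0 t)) :
    riemannLiouvilleIntegral a f t = riemannLiouvilleIntegral a g t := by
  simp only [riemannLiouvilleIntegral, integral_of_le ht]
  congr 1
  exact setIntegral_congr_fun measurableSet_Ioc fun u hu => by rw [h hu]

theorem riemannLiouvilleIntegral_riemannLiouvilleIntegral (ha : 0 < a) (hb : 0 < b)
    (ht : 0 ≤ t) (hf : AEStronglyMeasurable f (volume.restrict (Ioo 0 t)))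
    (hfab : IntegrableOn (fun u => (t - u) ^ (a + b - 1) * f u) (Ioo 0 t)) :
    IntervalIntegrable (fun s => (t - s) ^ (a - 1) * riemannLiouvilleIntegral b f s) volume 0 t ∧
      riemannLiouvilleIntegral a (riemannLiouvilleIntegral b f) t =
        riemannLiouvilleIntegral (a + b) f t := by
  obtain ⟨hint, heq⟩ := integral_rpow_mul_integral_rpow_mul ha hb hf hfab
  have hΓ : ∀ {c}, 0 < c → Gamma c ≠ 0 := fun hc => (Gamma_pos_of_pos hc).ne'
  simp only [riemannLiouvilleIntegral, mul_left_comm _ (Gamma b)⁻¹]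
  refine ⟨(intervalIntegrable_iff_integrableOn_Ioo_of_le ht).2 (hint.const_mul _), ?_⟩
  rw [intervalIntegral.integral_const_mul, integral_of_le ht, integral_of_le ht,
    integral_Ioc_eq_integral_Ioo, integral_Ioc_eq_integral_Ioo, heq, beta]
  field_simp [hΓ ha, hΓ hb, hΓ (add_pos ha hb)]

theorem riemannLiouvilleIntegral_riemannLiouvilleIntegral_one_sub (ha : a ∈ Ioo 0 1)
    (ht : 0 ≤ t) (hf : IntervalIntegrable f volume 0 t) :
    IntervalIntegrable (fun s => (t - s) ^ (a - 1) * riemannLiouvilleIntegral (1 - a) f s)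
        volume 0 t ∧
      riemannLiouvilleIntegral a (riemannLiouvilleIntegral (1 - a) f) t =
        ∫ u in (0:ℝ)..t, f u := by
  have hf' : IntegrableOn f (Ioo 0 t) := hf.1.mono_set Ioo_subset_Ioc_self
  have := riemannLiouvilleIntegral_riemannLiouvilleIntegral ha.1 (sub_pos.2 ha.2) ht
    hf'.aestronglyMeasurable (by simpa using hf')
  rwa [add_sub_cancel, riemannLiouvilleIntegral_one] at this

end RiemannLiouville

theorem integral_deriv_eq_sub_of_tendsto_nhdsGT {g : ℝ → ℝ} {τ : ℝ} (hτ : 0 < τ)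
    (hg : DifferentiableOn ℝ g (Ioc 0 τ)) (hg0 : Tendsto g (𝓝[>] 0) (𝓝 (g 0)))
    (hint : IntervalIntegrable (deriv g) volume 0 τ) :
    ∫ ξ in (0:ℝ)..τ, deriv g ξ = g τ - g 0 := by
  refine integral_eq_sub_of_hasDerivAt_of_le hτ.le (fun x hx => ?_)
    (fun x hx => (hg.differentiableAt (Ioc_mem_nhds hx.1 hx.2)).hasDerivAt) hint
  rcases hx.1.eq_or_lt with rfl | hx0
  · exact (continuousWithinAt_Ioi_iff_Ici.1 hg0).mono Icc_subset_Ici_self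
  · exact (hg.continuousOn x ⟨hx0, hx.2⟩).mono_of_mem_nhdsWithin
      (mem_nhdsWithin.2 ⟨Ioi 0, isOpen_Ioi, hx0, fun y hy => ⟨hy.1, hy.2.2⟩⟩)

theorem liquid_integroDifferential_equation_general
    (α κ p T : ℝ) (hα : α ∈ Set.Ioo (0:ℝ) 1)
    (w : ℝ → ℝ → ℝ)
    -- continuously differentiable in τ on (0, T]
    (hreg_τ : ∀ v ∈ Set.Icc (0:ℝ) 1, ContDiffOn ℝ 1 (fun τ => w v τ) (Set.Ioc 0 T))
    -- ∂w/∂τ integrable in time on (0, τ)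
    (hint₁ : ∀ v ∈ Set.Ioo (0:ℝ) 1, ∀ τ ∈ Set.Ioc (0:ℝ) T,
      IntervalIntegrable (fun ξ => deriv (fun s => w v s) ξ) volume 0 τ)
    -- (1/ξ) ∂w/∂v integrable in time on (0, τ)
    (hint₂ : ∀ v ∈ Set.Ioo (0:ℝ) 1, ∀ τ ∈ Set.Ioc (0:ℝ) T,
      IntervalIntegrable (fun ξ => ξ⁻¹ * deriv (fun y => w y ξ) v) volume 0 τ)
    -- w(v, τ) → w(v, 0) as τ → 0⁺
    (hcont₀ : ∀ v ∈ Set.Icc (0:ℝ) 1,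
      Tendsto (fun τ => w v τ) (nhdsWithin 0 (Set.Ioi 0)) (nhds (w v 0)))
    -- the transformed subdiffusion equation
    (heq : ∀ v ∈ Set.Ioo (0:ℝ) 1, ∀ τ ∈ Set.Ioc (0:ℝ) T,
      (1 / Real.Gamma (1 - α)) *
          (∫ ξ in (0:ℝ)..τ, (τ - ξ) ^ (-α) * deriv (fun s => w v s) ξ) -
        (α * v / (2 * Real.Gamma (1 - α))) *
          (∫ ξ in (0:ℝ)..τ, (τ - ξ) ^ (-α) * ξ⁻¹ * deriv (fun y => w y ξ) v) =
        κ / (p ^ 2 * τ ^ α) * iteratedDeriv 2 (fun y => w y τ) v) :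
    ∀ v ∈ Set.Ioo (0:ℝ) 1, ∀ τ ∈ Set.Ioc (0:ℝ) T,
      w v τ = w v 0 +
        (α * v / 2) * (∫ ξ in (0:ℝ)..τ, ξ⁻¹ * deriv (fun y => w y ξ) v) +
        (κ / (p ^ 2 * Real.Gamma α)) *
          ∫ ξ in (0:ℝ)..τ,
            (τ - ξ) ^ (α - 1) * ξ ^ (-α) * iteratedDeriv 2 (fun y => w y ξ) v := by
  intro v hv τ hτ
  have hv' : v ∈ Icc (0:ℝ) 1 := Ioo_subset_Icc_self hv
  set F := fun ξ => deriv (fun s => w v s) ξ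
  set G := fun ξ => ξ⁻¹ * deriv (fun y => w y ξ) v
  set W := fun ξ => iteratedDeriv 2 (fun y => w y ξ) v
  obtain ⟨hFint, hIF⟩ :=
    riemannLiouvilleIntegral_riemannLiouvilleIntegral_one_sub hα hτ.1.le (hint₁ v hv τ hτ)
  obtain ⟨hGint, hIG⟩ :=
    riemannLiouvilleIntegral_riemannLiouvilleIntegral_one_sub hα hτ.1.le (hint₂ v hv τ hτ)
  have hFTC : ∫ ξ in (0:ℝ)..τ, F ξ = w v τ - w v 0 :=
    integral_deriv_eq_sub_of_tendsto_nhdsGT hτ.1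
      (((hreg_τ v hv').mono (Ioc_subset_Ioc_right hτ.2)).differentiableOn one_ne_zero)
      (hcont₀ v hv') (hint₁ v hv τ hτ)
  have hsubdiffusion : EqOn
      (fun s => riemannLiouvilleIntegral (1 - α) F s -
        α * v / 2 * riemannLiouvilleIntegral (1 - α) G s)
      (fun s => κ / p ^ 2 * (s ^ (-α) * W s)) (Ioc 0 τ) := fun s hs => by
    have h := heq v hv s ⟨hs.1, hs.2.trans hτ.2⟩
    simp only [riemannLiouvilleIntegral, sub_sub_cancel_left, rpow_neg hs.1.le]
    simp only [mul_assoc] at h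
    linear_combination h
  have h := riemannLiouvilleIntegral_congr (a := α) hτ.1.le hsubdiffusion
  rw [riemannLiouvilleIntegral_sub hFint
      (by simpa only [mul_left_comm] using hGint.const_mul (α * v / 2)),
    riemannLiouvilleIntegral_const_mul, riemannLiouvilleIntegral_const_mul, hIF, hIG, hFTC,
    riemannLiouvilleIntegral] at h
  simp only [mul_assoc] at h ⊢
  linear_combination h

/-- If `w`, suitably regular on `[0,1] × [0,T]`, satisfies the transformed
subdiffusion equation of the liquid phase in the front-fixing variable
`v = x/(p τ^(α/2))`, then it satisfies the associated integro-differential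
equation obtained by applying the Riemann–Liouville integral `I₀₊^α`. -/
theorem liquid_integroDifferential_equation
    (α κ p T : ℝ) (hα : α ∈ Set.Ioo (0:ℝ) 1) (hκ : 0 < κ) (hp : 0 < p) (hT : 0 < T)
    (w : ℝ → ℝ → ℝ)
    -- continuously differentiable in τ on (0, T]
    (hreg_τ : ∀ v ∈ Set.Icc (0:ℝ) 1, ContDiffOn ℝ 1 (fun τ => w v τ) (Set.Ioc 0 T))
    -- twice continuously differentiable in v
    (hreg_v : ∀ τ ∈ Set.Ioc (0:ℝ) T, ContDiffOn ℝ 2 (fun v => w v τ) (Set.Icc 0 1))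
    -- ∂w/∂τ integrable in time on (0, τ)
    (hint₁ : ∀ v ∈ Set.Ioo (0:ℝ) 1, ∀ τ ∈ Set.Ioc (0:ℝ) T,
      IntervalIntegrable (fun ξ => deriv (fun s => w v s) ξ) volume 0 τ)
    -- (1/ξ) ∂w/∂v integrable in time on (0, τ)
    (hint₂ : ∀ v ∈ Set.Ioo (0:ℝ) 1, ∀ τ ∈ Set.Ioc (0:ℝ) T,
      IntervalIntegrable (fun ξ => ξ⁻¹ * deriv (fun y => w y ξ) v) volume 0 τ)
    -- ξ^(−α) ∂²w/∂v² integrable in time on (0, τ)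
    (hint₃ : ∀ v ∈ Set.Ioo (0:ℝ) 1, ∀ τ ∈ Set.Ioc (0:ℝ) T,
      IntervalIntegrable (fun ξ => ξ ^ (-α) * iteratedDeriv 2 (fun y => w y ξ) v)
        volume 0 τ)
    -- w(v, τ) → w(v, 0) as τ → 0⁺
    (hcont₀ : ∀ v ∈ Set.Icc (0:ℝ) 1,
      Tendsto (fun τ => w v τ) (nhdsWithin 0 (Set.Ioi 0)) (nhds (w v 0)))
    -- the transformed subdiffusion equation
    (heq : ∀ v ∈ Set.Ioo (0:ℝ) 1, ∀ τ ∈ Set.Ioc (0:ℝ) T,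
      (1 / Real.Gamma (1 - α)) *
          (∫ ξ in (0:ℝ)..τ, (τ - ξ) ^ (-α) * deriv (fun s => w v s) ξ) -
        (α * v / (2 * Real.Gamma (1 - α))) *
          (∫ ξ in (0:ℝ)..τ, (τ - ξ) ^ (-α) * ξ⁻¹ * deriv (fun y => w y ξ) v) =
        κ / (p ^ 2 * τ ^ α) * iteratedDeriv 2 (fun y => w y τ) v) :
    ∀ v ∈ Set.Ioo (0:ℝ) 1, ∀ τ ∈ Set.Ioc (0:ℝ) T,
      w v τ = w v 0 +
        (α * v / 2) * (∫ ξ in (0:ℝ)..τ, ξ⁻¹ * deriv (fun y => w y ξ) v) +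
        (κ / (p ^ 2 * Real.Gamma α)) *
          ∫ ξ in (0:ℝ)..τ,
            (τ - ξ) ^ (α - 1) * ξ ^ (-α) * iteratedDeriv 2 (fun y => w y ξ) v :=
  liquid_integroDifferential_equation_general α κ p T hα w hreg_τ hint₁ hint₂ hcont₀ heq
end

section
/- Let 0 < α < 1, κ > 0, p > 0, L > 0, T > 0. Let w : [0, 1] × [0, T] → ℝ be continuously differentiable in τ on (0, T] and twice continuously differentiable in v, with ∂w/∂τ, (1/(ξ(p − L ξ^{−α/2}))) ∂w/∂v and (L − p ξ^{α/2})^{−2} ∂²w/∂v² integrable in the time variable on (0, τ) for each τ ∈ (0, T] and v ∈ (0, 1), and w(v, τ) → w(v, 0) as τ → 0⁺. Suppose w satisfies, for all v ∈ (0, 1) and τ ∈ (0, T], (1/Γ(1−α)) ∫₀^τ (τ−ξ)^{−α} (∂w/∂ξ)(v, ξ) dξ − (α p (v − 1)/(2Γ(1−α))) ∫₀^τ (τ−ξ)^{−α} (ξ (p − L ξ^{−α/2}))^{−1} (∂w/∂v)(v, ξ) dξ = (κ/(L − p τ^{α/2})²) (∂²w/∂v²)(v, τ). Then for all v ∈ (0,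 1) and τ ∈ (0, T]: w(v, τ) = w(v, 0) + (α p (v − 1)/2) ∫₀^τ (ξ (p − L ξ^{−α/2}))^{−1} (∂w/∂v)(v, ξ) dξ + (κ/Γ(α)) ∫₀^τ (τ−ξ)^{α−1} (L − p ξ^{α/2})^{−2} (∂²w/∂v²)(v, ξ) dξ. -/
/-!
Multiplying the equation at time `s` by `(τ - s)^(α-1)` and integrating over `(0, τ)` applies
`Γ(α) I₀₊^α` to it. By Fubini on the triangle `0 < ξ ≤ s ≤ τ` and the Beta integral
`∫_ξ^τ (τ - s)^(a-1) (s - ξ)^(b-1) ds = B(a, b) (τ - ξ)^(a+b-1)`, the Riemann–Liouville integrals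
compose as `I^a ∘ I^b = I^(a+b)`; with `a + b = 1` the Caputo term becomes `I¹ ∂_τ w`, which the
fundamental theorem of calculus (with `w(v, ·)` only right-continuous at `0`) turns into
`w(v, τ) - w(v, 0)`.
-/

open Real MeasureTheory Filter Set Topology

theorem integral_rpow_mul_sub_rpow {a b c : ℝ} (ha : 0 < a) (hb : 0 < b) (hc : 0 < c) :
    ∫ x in 0..c, x ^ (a - 1) * (c - x) ^ (b - 1) =
      c ^ (a + b - 1) * (Gamma a * Gamma b / Gamma (a + b)) := by
  have hcast : ((∫ x in 0..c, x ^ (a - 1) * (c - x) ^ (b - 1) : ℝ) : ℂ) =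
      ∫ x in 0..c, (x : ℂ) ^ ((a : ℂ) - 1) * ((c : ℂ) - x) ^ ((b : ℂ) - 1) := by
    rw [← intervalIntegral.integral_ofReal]
    refine intervalIntegral.integral_congr fun x hx => ?_
    rw [uIcc_of_le hc.le] at hx
    rw [Complex.ofReal_mul, Complex.ofReal_cpow hx.1, Complex.ofReal_cpow (sub_nonneg.2 hx.2)]
    push_cast
    rfl
  have hbeta := Complex.Gamma_mul_Gamma_eq_betaIntegral (s := (a : ℂ)) (t := (b : ℂ))
    (by simpa using ha) (by simpa using hb)
  have hΓ : Complex.Gamma ((a : ℂ) + b) ≠ 0 := by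
    rw [← Complex.ofReal_add, Complex.Gamma_ofReal]
    exact_mod_cast (Gamma_pos_of_pos (add_pos ha hb)).ne'
  have hB : Complex.betaIntegral a b =
      Complex.Gamma a * Complex.Gamma b / Complex.Gamma (a + b) := by
    rw [hbeta]; field_simp
  apply Complex.ofReal_injective
  rw [hcast, Complex.betaIntegral_scaled _ _ hc, hB]
  push_cast
  rw [Complex.ofReal_cpow hc.le, ← Complex.Gamma_ofReal, ← Complex.Gamma_ofReal,
    ← Complex.Gamma_ofReal]
  push_cast
  ring

theorem intervalIntegrable_rpow_mul_sub_rpow {a b c : ℝ} (ha : 0 < a) (hb : 0 < b) (hc : 0 < c) :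
    IntervalIntegrable (fun x => x ^ (a - 1) * (c - x) ^ (b - 1)) volume 0 c := by
  have hm : c / 2 ∈ Ioo 0 c := ⟨by linarith, by linarith⟩
  refine IntervalIntegrable.trans (b := c / 2) ?_ ?_
  · refine (intervalIntegral.intervalIntegrable_rpow' (by linarith)).mul_continuousOn ?_
    refine ContinuousOn.rpow_const (by fun_prop) fun x hx => Or.inl ?_
    rw [uIcc_of_le hm.1.le] at hx
    linarith [hx.2]
  · have hright : IntervalIntegrable (fun x => (c - x) ^ (b - 1)) volume (c / 2) c := by
      simpa using ((intervalIntegral.intervalIntegrable_rpow' (a := 0) (b := c - c / 2)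
        (by linarith : -1 < b - 1)).comp_sub_left c).symm
    refine hright.continuousOn_mul ?_
    refine ContinuousOn.rpow_const (by fun_prop) fun x hx => Or.inl ?_
    rw [uIcc_of_le hm.2.le] at hx
    linarith [hx.1]

theorem integral_sub_rpow_mul_sub_rpow {a b ξ τ : ℝ} (ha : 0 < a) (hb : 0 < b) (h : ξ < τ) :
    IntervalIntegrable (fun s => (τ - s) ^ (a - 1) * (s - ξ) ^ (b - 1)) volume ξ τ ∧
      ∫ s in ξ..τ, (τ - s) ^ (a - 1) * (s - ξ) ^ (b - 1) =
        (τ - ξ) ^ (a + b - 1) * (Gamma a * Gamma b / Gamma (a + b)) := by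
  have hshift : (fun s => (τ - s) ^ (a - 1) * (s - ξ) ^ (b - 1)) =
      fun s => (fun x => x ^ (b - 1) * (τ - ξ - x) ^ (a - 1)) (s - ξ) := by
    funext s
    dsimp only
    rw [sub_sub_sub_cancel_right, mul_comm]
  rw [hshift]
  constructor
  · simpa using (intervalIntegrable_rpow_mul_sub_rpow hb ha (sub_pos.2 h)).comp_sub_right ξ
  · rw [intervalIntegral.integral_comp_sub_right (fun x => x ^ (b - 1) * (τ - ξ - x) ^ (a - 1)),
      sub_self, integral_rpow_mul_sub_rpow hb ha (sub_pos.2 h), add_comm b, mul_comm (Gamma b)]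

theorem ae_restrict_Ioc_mem_Ioo {l u : ℝ} : ∀ᵐ x ∂volume.restrict (Ioc l u), x ∈ Ioo l u := by
  rw [← Measure.restrict_congr_set Ioo_ae_eq_Ioc]
  exact ae_restrict_mem measurableSet_Ioo

section Semigroup

variable {a b τ : ℝ}

noncomputable def triangleKernel (a b τ : ℝ) : ℝ × ℝ → ℝ :=
  {q : ℝ × ℝ | q.2 ≤ q.1}.indicator fun q => (τ - q.1) ^ (a - 1) * (q.1 - q.2) ^ (b - 1)

theorem measurable_triangleKernel : Measurable (triangleKernel a b τ) :=
  (by fun_prop : Measurable fun q : ℝ × ℝ => (τ - q.1) ^ (a - 1) * (q.1 - q.2) ^ (b - 1)).indicator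
    (measurableSet_le measurable_snd measurable_fst)

theorem triangleKernel_nonneg {s ξ : ℝ} (hs : s ≤ τ) : 0 ≤ triangleKernel a b τ (s, ξ) := by
  simp only [triangleKernel, indicator_apply, mem_ofPred_eq]
  split_ifs with hξs
  · exact mul_nonneg (rpow_nonneg (sub_nonneg.2 hs) _) (rpow_nonneg (sub_nonneg.2 hξs) _)
  · exact le_rfl

theorem integral_triangleKernel_fst (ha : 0 < a) (hb : 0 < b) {ξ : ℝ} (hξ : ξ ∈ Ioo 0 τ) :
    IntegrableOn (fun s => triangleKernel a b τ (s, ξ)) (Ioc 0 τ) ∧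
      ∫ s in Ioc 0 τ, triangleKernel a b τ (s, ξ) =
        (τ - ξ) ^ (a + b - 1) * (Gamma a * Gamma b / Gamma (a + b)) := by
  have hsection : (fun s => triangleKernel a b τ (s, ξ)) =
      (Ici ξ).indicator fun s => (τ - s) ^ (a - 1) * (s - ξ) ^ (b - 1) := by
    funext s
    simp only [triangleKernel, indicator_apply, mem_ofPred_eq, mem_Ici]
  have hrestrict : (volume.restrict (Ioc 0 τ)).restrict (Ici ξ) = volume.restrict (Icc ξ τ) := by
    rw [Measure.restrict_restrict measurableSet_Ici]
    congr 1
    ext x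
    simp only [mem_inter_iff, mem_Ici, mem_Ioc, mem_Icc]
    exact ⟨fun h => ⟨h.1, h.2.2⟩, fun h => ⟨h.1, hξ.1.trans_le h.1, h.2⟩⟩
  obtain ⟨hint, hval⟩ := integral_sub_rpow_mul_sub_rpow ha hb hξ.2
  rw [hsection, IntegrableOn, integrable_indicator_iff measurableSet_Ici, IntegrableOn, hrestrict,
    integral_indicator measurableSet_Ici, hrestrict, integral_Icc_eq_integral_Ioc,
    ← intervalIntegral.integral_of_le hξ.2.le]
  exact ⟨(integrableOn_Icc_iff_integrableOn_Ioc enorm_ne_top).2 hint.1, hval⟩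

theorem integral_triangleKernel_snd_mul {s : ℝ} (hs : s ∈ Ioc 0 τ) (f : ℝ → ℝ) :
    ∫ ξ in Ioc 0 τ, triangleKernel a b τ (s, ξ) * f ξ =
      (τ - s) ^ (a - 1) * ∫ ξ in 0..s, (s - ξ) ^ (b - 1) * f ξ := by
  have hsection : (fun ξ => triangleKernel a b τ (s, ξ) * f ξ) =
      (Iic s).indicator fun ξ => (τ - s) ^ (a - 1) * ((s - ξ) ^ (b - 1) * f ξ) := by
    funext ξ
    simp only [triangleKernel, indicator_apply, mem_ofPred_eq, mem_Iic]
    split_ifs <;> ring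
  rw [hsection, integral_indicator measurableSet_Iic, Measure.restrict_restrict measurableSet_Iic,
    Iic_inter_Ioc_of_le hs.2, integral_const_mul, intervalIntegral.integral_of_le hs.1.le]

theorem integrable_triangleKernel_mul (ha : 0 < a) (hb : 0 < b) {f : ℝ → ℝ}
    (hf_meas : AEStronglyMeasurable f (volume.restrict (Ioc 0 τ)))
    (hf : IntervalIntegrable (fun ξ => (τ - ξ) ^ (a + b - 1) * f ξ) volume 0 τ) :
    Integrable (fun q => triangleKernel a b τ q * f q.2)
      ((volume.restrict (Ioc 0 τ)).prod (volume.restrict (Ioc 0 τ))) := by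
  have hnorm : ∀ ξ ∈ Ioo 0 τ, ∫ s in Ioc 0 τ, ‖triangleKernel a b τ (s, ξ) * f ξ‖ =
      Gamma a * Gamma b / Gamma (a + b) * ‖(τ - ξ) ^ (a + b - 1) * f ξ‖ := by
    intro ξ hξ
    rw [setIntegral_congr_fun measurableSet_Ioc fun s hs => by
        rw [norm_mul, Real.norm_of_nonneg (triangleKernel_nonneg hs.2)],
      integral_mul_const, (integral_triangleKernel_fst ha hb hξ).2, norm_mul,
      Real.norm_of_nonneg (rpow_nonneg (sub_nonneg.2 hξ.2.le) _)]
    ring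
  refine (integrable_prod_iff' ?_).2 ⟨?_, ?_⟩
  · exact (measurable_triangleKernel.aestronglyMeasurable).mul hf_meas.comp_snd
  · filter_upwards [ae_restrict_Ioc_mem_Ioo] with ξ hξ
    exact (integral_triangleKernel_fst ha hb hξ).1.mul_const _
  · refine (hf.1.norm.const_mul (Gamma a * Gamma b / Gamma (a + b))).congr ?_
    filter_upwards [ae_restrict_Ioc_mem_Ioo] with ξ hξ
    exact (hnorm ξ hξ).symm

theorem integral_sub_rpow_mul_integral_sub_rpow_mul (ha : 0 < a) (hb : 0 < b) (hτ : 0 < τ)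
    {f : ℝ → ℝ} (hf_meas : AEStronglyMeasurable f (volume.restrict (Ioc 0 τ)))
    (hf : IntervalIntegrable (fun ξ => (τ - ξ) ^ (a + b - 1) * f ξ) volume 0 τ) :
    IntervalIntegrable (fun s => (τ - s) ^ (a - 1) * ∫ ξ in 0..s, (s - ξ) ^ (b - 1) * f ξ)
        volume 0 τ ∧
      ∫ s in 0..τ, (τ - s) ^ (a - 1) * ∫ ξ in 0..s, (s - ξ) ^ (b - 1) * f ξ =
        Gamma a * Gamma b / Gamma (a + b) * ∫ ξ in 0..τ, (τ - ξ) ^ (a + b - 1) * f ξ := by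
  have hF := integrable_triangleKernel_mul ha hb hf_meas hf
  have hinner : ∀ᵐ s ∂volume.restrict (Ioc 0 τ),
      ∫ ξ in Ioc 0 τ, triangleKernel a b τ (s, ξ) * f ξ =
        (τ - s) ^ (a - 1) * ∫ ξ in 0..s, (s - ξ) ^ (b - 1) * f ξ := by
    filter_upwards [ae_restrict_mem measurableSet_Ioc] with s hs
    exact integral_triangleKernel_snd_mul hs f
  have houter : ∀ᵐ ξ ∂volume.restrict (Ioc 0 τ),
      ∫ s in Ioc 0 τ, triangleKernel a b τ (s, ξ) * f ξ =
        Gamma a * Gamma b / Gamma (a + b) * ((τ - ξ) ^ (a + b - 1) * f ξ) := by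
    filter_upwards [ae_restrict_Ioc_mem_Ioo] with ξ hξ
    rw [integral_mul_const, (integral_triangleKernel_fst ha hb hξ).2]
    ring
  rw [intervalIntegrable_iff_integrableOn_Ioc_of_le hτ.le, intervalIntegral.integral_of_le hτ.le,
    intervalIntegral.integral_of_le hτ.le, ← integral_const_mul]
  refine ⟨hF.integral_prod_left.congr hinner, ?_⟩
  calc _ = ∫ s in Ioc 0 τ, ∫ ξ in Ioc 0 τ, triangleKernel a b τ (s, ξ) * f ξ :=
        integral_congr_ae (hinner.mono fun _ h => h.symm)
    _ = ∫ ξ in Ioc 0 τ, ∫ s in Ioc 0 τ, triangleKernel a b τ (s, ξ) * f ξ :=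
        integral_integral_swap hF
    _ = _ := integral_congr_ae houter

end Semigroup

theorem integral_sub_rpow_mul_integral_sub_rpow_neg_mul {α τ : ℝ} (hα : α ∈ Ioo 0 1)
    (hτ : 0 < τ) {f : ℝ → ℝ} (hf : IntervalIntegrable f volume 0 τ) :
    IntervalIntegrable (fun s => (τ - s) ^ (α - 1) * ∫ ξ in 0..s, (s - ξ) ^ (-α) * f ξ)
        volume 0 τ ∧
      ∫ s in 0..τ, (τ - s) ^ (α - 1) * ∫ ξ in 0..s, (s - ξ) ^ (-α) * f ξ =
        Gamma α * Gamma (1 - α) * ∫ ξ in 0..τ, f ξ := by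
  simpa using integral_sub_rpow_mul_integral_sub_rpow_mul hα.1 (sub_pos.2 hα.2) hτ
    hf.1.aestronglyMeasurable (by simpa using hf)

theorem integral_deriv_eq_sub_of_differentiableOn_Ioc {f : ℝ → ℝ} {a b : ℝ} (hab : a ≤ b)
    (hf : DifferentiableOn ℝ f (Ioc a b)) (ha : Tendsto f (𝓝[>] a) (𝓝 (f a)))
    (hf' : IntervalIntegrable (deriv f) volume a b) :
    ∫ x in a..b, deriv f x = f b - f a := by
  refine intervalIntegral.integral_eq_sub_of_hasDerivAt_of_le hab ?_ (fun x hx => ?_) hf'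
  · rw [← Ioc_insert_left hab]
    rintro x (rfl | hx) <;> apply ContinuousWithinAt.insert'
    · exact ha.mono_left (nhdsWithin_mono _ Ioc_subset_Ioi_self)
    · exact hf.continuousOn x hx
  · exact (hf.differentiableAt (Ioc_mem_nhds hx.1 hx.2)).hasDerivAt

theorem solid_integroDifferential_equation_general
    (α κ p L T : ℝ) (hα : α ∈ Set.Ioo (0:ℝ) 1)
    (w : ℝ → ℝ → ℝ)
    -- continuously differentiable in τ on (0, T]
    (hreg_τ : ∀ v ∈ Set.Icc (0:ℝ) 1, ContDiffOn ℝ 1 (fun τ => w v τ) (Set.Ioc 0 T))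
    -- ∂w/∂τ integrable in time on (0, τ)
    (hint₁ : ∀ v ∈ Set.Ioo (0:ℝ) 1, ∀ τ ∈ Set.Ioc (0:ℝ) T,
      IntervalIntegrable (fun ξ => deriv (fun s => w v s) ξ) volume 0 τ)
    -- (ξ (p − L ξ^(−α/2)))⁻¹ ∂w/∂v integrable in time on (0, τ)
    (hint₂ : ∀ v ∈ Set.Ioo (0:ℝ) 1, ∀ τ ∈ Set.Ioc (0:ℝ) T,
      IntervalIntegrable
        (fun ξ => (ξ * (p - L * ξ ^ (-(α / 2))))⁻¹ * deriv (fun y => w y ξ) v)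
        volume 0 τ)
    -- w(v, τ) → w(v, 0) as τ → 0⁺
    (hcont₀ : ∀ v ∈ Set.Icc (0:ℝ) 1,
      Tendsto (fun τ => w v τ) (nhdsWithin 0 (Set.Ioi 0)) (nhds (w v 0)))
    -- the transformed subdiffusion equation for the solid phase
    (heq : ∀ v ∈ Set.Ioo (0:ℝ) 1, ∀ τ ∈ Set.Ioc (0:ℝ) T,
      (1 / Real.Gamma (1 - α)) *
          (∫ ξ in (0:ℝ)..τ, (τ - ξ) ^ (-α) * deriv (fun s => w v s) ξ) -
        (α * p * (v - 1) / (2 * Real.Gamma (1 - α))) *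
          (∫ ξ in (0:ℝ)..τ,
            (τ - ξ) ^ (-α) * (ξ * (p - L * ξ ^ (-(α / 2))))⁻¹ *
              deriv (fun y => w y ξ) v) =
        κ / (L - p * τ ^ (α / 2)) ^ 2 * iteratedDeriv 2 (fun y => w y τ) v) :
    ∀ v ∈ Set.Ioo (0:ℝ) 1, ∀ τ ∈ Set.Ioc (0:ℝ) T,
      w v τ = w v 0 +
        (α * p * (v - 1) / 2) *
          (∫ ξ in (0:ℝ)..τ,
            (ξ * (p - L * ξ ^ (-(α / 2))))⁻¹ * deriv (fun y => w y ξ) v) +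
        (κ / Real.Gamma α) *
          ∫ ξ in (0:ℝ)..τ,
            (τ - ξ) ^ (α - 1) * ((L - p * ξ ^ (α / 2)) ^ 2)⁻¹ *
              iteratedDeriv 2 (fun y => w y ξ) v := by
  intro v hv τ hτ
  have hv' : v ∈ Icc (0:ℝ) 1 := Ioo_subset_Icc_self hv
  have hFTC : ∫ ξ in 0..τ, deriv (fun s => w v s) ξ = w v τ - w v 0 :=
    integral_deriv_eq_sub_of_differentiableOn_Ioc hτ.1.le
      (((hreg_τ v hv').differentiableOn one_ne_zero).mono (Ioc_subset_Ioc_right hτ.2))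
      (hcont₀ v hv') (hint₁ v hv τ hτ)
  obtain ⟨hdτ_int, hdτ_val⟩ :=
    integral_sub_rpow_mul_integral_sub_rpow_neg_mul hα hτ.1 (hint₁ v hv τ hτ)
  obtain ⟨hdv_int, hdv_val⟩ :=
    integral_sub_rpow_mul_integral_sub_rpow_neg_mul hα hτ.1 (hint₂ v hv τ hτ)
  have hweighted : κ * ∫ s in 0..τ, (τ - s) ^ (α - 1) * ((L - p * s ^ (α / 2)) ^ 2)⁻¹ *
        iteratedDeriv 2 (fun y => w y s) v =
      1 / Gamma (1 - α) * (Gamma α * Gamma (1 - α) * ∫ ξ in 0..τ, deriv (fun s => w v s) ξ) -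
        α * p * (v - 1) / (2 * Gamma (1 - α)) * (Gamma α * Gamma (1 - α) *
          ∫ ξ in 0..τ, (ξ * (p - L * ξ ^ (-(α / 2))))⁻¹ * deriv (fun y => w y ξ) v) := by
    rw [← hdτ_val, ← hdv_val, ← intervalIntegral.integral_const_mul,
      ← intervalIntegral.integral_const_mul, ← intervalIntegral.integral_const_mul,
      ← intervalIntegral.integral_sub (hdτ_int.const_mul _) (hdv_int.const_mul _)]
    refine intervalIntegral.integral_congr_ae (ae_of_all _ fun s hs => ?_)
    rw [uIoc_of_le hτ.1.le] at hs
    have := heq v hv s ⟨hs.1, hs.2.trans hτ.2⟩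
    simp only [← mul_assoc] at this ⊢
    linear_combination (-(τ - s) ^ (α - 1)) * this
  have hΓα : Gamma α ≠ 0 := (Gamma_pos_of_pos hα.1).ne'
  have hΓ : Gamma (1 - α) ≠ 0 := (Gamma_pos_of_pos (sub_pos.2 hα.2)).ne'
  rw [hFTC] at hweighted
  field_simp at hweighted ⊢
  linear_combination -hweighted

/-- If `w`, suitably regular on `[0,1] × [0,T]`, satisfies the transformed
subdiffusion equation of the solid phase in the front-fixing variable
`v = (x − p τ^(α/2))/(L − p τ^(α/2))` (where `L = l₂/l₁`), then it satisfies the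
associated integro-differential equation obtained by applying `I₀₊^α`. -/
theorem solid_integroDifferential_equation
    (α κ p L T : ℝ) (hα : α ∈ Set.Ioo (0:ℝ) 1) (hκ : 0 < κ) (hp : 0 < p)
    (hL : 0 < L) (hT : 0 < T)
    (w : ℝ → ℝ → ℝ)
    -- continuously differentiable in τ on (0, T]
    (hreg_τ : ∀ v ∈ Set.Icc (0:ℝ) 1, ContDiffOn ℝ 1 (fun τ => w v τ) (Set.Ioc 0 T))
    -- twice continuously differentiable in v
    (hreg_v : ∀ τ ∈ Set.Ioc (0:ℝ) T, ContDiffOn ℝ 2 (fun v => w v τ) (Set.Icc 0 1))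
    -- ∂w/∂τ integrable in time on (0, τ)
    (hint₁ : ∀ v ∈ Set.Ioo (0:ℝ) 1, ∀ τ ∈ Set.Ioc (0:ℝ) T,
      IntervalIntegrable (fun ξ => deriv (fun s => w v s) ξ) volume 0 τ)
    -- (ξ (p − L ξ^(−α/2)))⁻¹ ∂w/∂v integrable in time on (0, τ)
    (hint₂ : ∀ v ∈ Set.Ioo (0:ℝ) 1, ∀ τ ∈ Set.Ioc (0:ℝ) T,
      IntervalIntegrable
        (fun ξ => (ξ * (p - L * ξ ^ (-(α / 2))))⁻¹ * deriv (fun y => w y ξ) v)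
        volume 0 τ)
    -- (L − p ξ^(α/2))^(−2) ∂²w/∂v² integrable in time on (0, τ)
    (hint₃ : ∀ v ∈ Set.Ioo (0:ℝ) 1, ∀ τ ∈ Set.Ioc (0:ℝ) T,
      IntervalIntegrable
        (fun ξ => ((L - p * ξ ^ (α / 2)) ^ 2)⁻¹ * iteratedDeriv 2 (fun y => w y ξ) v)
        volume 0 τ)
    -- w(v, τ) → w(v, 0) as τ → 0⁺
    (hcont₀ : ∀ v ∈ Set.Icc (0:ℝ) 1,
      Tendsto (fun τ => w v τ) (nhdsWithin 0 (Set.Ioi 0)) (nhds (w v 0)))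
    -- the transformed subdiffusion equation for the solid phase
    (heq : ∀ v ∈ Set.Ioo (0:ℝ) 1, ∀ τ ∈ Set.Ioc (0:ℝ) T,
      (1 / Real.Gamma (1 - α)) *
          (∫ ξ in (0:ℝ)..τ, (τ - ξ) ^ (-α) * deriv (fun s => w v s) ξ) -
        (α * p * (v - 1) / (2 * Real.Gamma (1 - α))) *
          (∫ ξ in (0:ℝ)..τ,
            (τ - ξ) ^ (-α) * (ξ * (p - L * ξ ^ (-(α / 2))))⁻¹ *
              deriv (fun y => w y ξ) v) =
        κ / (L - p * τ ^ (α / 2)) ^ 2 * iteratedDeriv 2 (fun y => w y τ) v) :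
    ∀ v ∈ Set.Ioo (0:ℝ) 1, ∀ τ ∈ Set.Ioc (0:ℝ) T,
      w v τ = w v 0 +
        (α * p * (v - 1) / 2) *
          (∫ ξ in (0:ℝ)..τ,
            (ξ * (p - L * ξ ^ (-(α / 2))))⁻¹ * deriv (fun y => w y ξ) v) +
        (κ / Real.Gamma α) *
          ∫ ξ in (0:ℝ)..τ,
            (τ - ξ) ^ (α - 1) * ((L - p * ξ ^ (α / 2)) ^ 2)⁻¹ *
              iteratedDeriv 2 (fun y => w y ξ) v :=
  solid_integroDifferential_equation_general α κ p L T hα w hreg_τ hint₁ hint₂ hcont₀ heq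
end
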